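/- arXiv:2211.01699 — 9 statements merged into one kernel-verified Lean document; each statement's English description precedes it below -/
import Mathlib

section
/- Let G = (V,E) be a finite simple graph with nonnegative vertex weights w, and let x* : V → {0, 1/2, 1} be a feasible solution of the standard LP relaxation attaining its optimal value LP(G,w). Set V_α = {v ∈ V : x*(v) = α} for α ∈ {0, 1/2, 1} and let G_{1/2} be the subgraph of G induced by V_{1/2}. Then OPT(G_{1/2}, w) = OPT(G, w) − w(V_1). -/
open Finset

/-- `C` is a vertex cover of `G`. -/
def IsVC {V : Type*} (G : SimpleGraph V) (C : Finset V) : Prop :=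
  ∀ ⦃u v : V⦄, G.Adj u v → u ∈ C ∨ v ∈ C

/-- `OPT G w` : minimum weight of a vertex cover of `G`. -/
noncomputable def OPT {V : Type*} [Fintype V] (G : SimpleGraph V) (w : V → ℝ) : ℝ :=
  sInf {t : ℝ | ∃ C : Finset V, IsVC G C ∧ t = ∑ v ∈ C, w v}

/-- `LPval G w` : optimal value of the standard vertex cover LP relaxation. -/
noncomputable def LPval {V : Type*} [Fintype V] (G : SimpleGraph V) (w : V → ℝ) : ℝ :=
  sInf {t : ℝ | ∃ x : V → ℝ, (∀ v, 0 ≤ x v) ∧ (∀ ⦃u v : V⦄, G.Adj u v → 1 ≤ x u + x v) ∧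
    t = ∑ v, w v * x v}

/-- The graph `G ∖ S` (vertices of `S` kept as isolated vertices). -/
def Gdel {V : Type*} (G : SimpleGraph V) (S : Set V) : SimpleGraph V :=
  SimpleGraph.fromRel (fun u v => G.Adj u v ∧ u ∉ S ∧ v ∉ S)

open scoped Classical in
/-- Sum of `y` over the set of edges described by `P`. -/
noncomputable def ysum {V : Type*} [Fintype V] [DecidableEq V]
    (y : Sym2 V → ℝ) (P : Sym2 V → Prop) : ℝ :=
  ∑ e : Sym2 V, if P e then y e else 0

/-- `y` is a dual certificate for `w` : a feasible dual solution with `y(δ(v)) = w v`. -/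
def IsDualCert {V : Type*} [Fintype V] [DecidableEq V] (G : SimpleGraph V)
    (w : V → ℝ) (y : Sym2 V → ℝ) : Prop :=
  (∀ e, 0 ≤ y e) ∧ (∀ e, e ∉ G.edgeSet → y e = 0) ∧
    ∀ v : V, ysum y (fun e => e ∈ G.edgeSet ∧ v ∈ e) = w v

/-- Membership in the polytope `Q^W`. -/
def memQW {V : Type*} [Fintype V] [DecidableEq V] (G : SimpleGraph V) (w : V → ℝ) : Prop :=
  (∀ v, 0 ≤ w v) ∧ (∑ v, w v) = 2 ∧ ∃ y : Sym2 V → ℝ, IsDualCert G w y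

/-- `G` has odd girth `n` : it contains an odd cycle of length `n` and no shorter one. -/
def HasOddGirth {V : Type*} (G : SimpleGraph V) (n : ℕ) : Prop :=
  Odd n ∧ (∃ (v : V) (c : G.Walk v v), c.IsCycle ∧ c.length = n) ∧
    ∀ (v : V) (c : G.Walk v v), c.IsCycle → Odd c.length → n ≤ c.length

/-- The contraction `G / S` of the vertex set `S` to a single new vertex `none`. -/
def contract {V : Type*} (G : SimpleGraph V) (S : Set V) :
    SimpleGraph (Option {v : V // v ∉ S}) :=
  SimpleGraph.fromRel (fun x y =>
    match x, y with
    | some u, some v => G.Adj u.1 v.1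
    | some u, none => ∃ s ∈ S, G.Adj u.1 s
    | none, _ => False)

/-- `I` is an independent set of `G`. -/
def IsIndep {V : Type*} (G : SimpleGraph V) (I : Finset V) : Prop :=
  ∀ ⦃u⦄, u ∈ I → ∀ ⦃v⦄, v ∈ I → ¬ G.Adj u v

/-- The fractional chromatic number of `G`. -/
noncomputable def fracChrom {V : Type*} [Fintype V] [DecidableEq V] (G : SimpleGraph V) : ℝ :=
  sInf {t : ℝ | ∃ y : Finset V → ℝ, (∀ I, 0 ≤ y I) ∧ (∀ I, ¬ IsIndep G I → y I = 0) ∧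
    (∀ v : V, 1 ≤ ∑ I : Finset V, if v ∈ I then y I else 0) ∧ t = ∑ I : Finset V, y I}


lemma gdel_adj' {V : Type*} (G : SimpleGraph V) (S : Set V) {u v : V} :
    (Gdel G S).Adj u v ↔ G.Adj u v ∧ u ∉ S ∧ v ∉ S := by
  simp only [Gdel, SimpleGraph.fromRel_adj]
  constructor
  · rintro ⟨hne, h | h⟩
    · exact h
    · exact ⟨h.1.symm, h.2.2, h.2.1⟩
  · intro h; exact ⟨h.1.ne, Or.inl h⟩

open scoped Classical in
lemma nt_key {V : Type*} [Fintype V] [DecidableEq V]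
    (G : SimpleGraph V) (w : V → ℝ) (hw : ∀ v, 0 ≤ w v)
    (x : V → ℝ) (hx0 : ∀ v, 0 ≤ x v)
    (hxf : ∀ ⦃u v : V⦄, G.Adj u v → 1 ≤ x u + x v)
    (hhalf : ∀ v, x v = 0 ∨ x v = 1/2 ∨ x v = 1)
    (hopt : ∑ v, w v * x v = LPval G w)
    (C : Finset V) (hC : IsVC G C) :
    ∑ v ∈ univ.filter (fun v => x v = 1 ∧ v ∉ C), w v
      ≤ ∑ v ∈ univ.filter (fun v => x v = 0 ∧ v ∈ C), w v := by
  by_contra hlt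
  push_neg at hlt
  set x' : V → ℝ := fun v => if x v = 0 ∧ v ∈ C then 1/2
    else if x v = 1 ∧ v ∉ C then 1/2 else x v with hx'
  have hx'0 : ∀ v, 0 ≤ x' v := by
    intro v; simp only [hx']
    split_ifs
    · norm_num
    · norm_num
    · exact hx0 v
  have hhalfge : ∀ v, ¬(x v = 0 ∧ v ∉ C) → 1/2 ≤ x' v := by
    intro v hv; simp only [hx']
    split_ifs with h1 h2
    · norm_num
    · norm_num
    · rcases hhalf v with h | h | h
      · exact absurd ⟨h, fun hc => h1 ⟨h, hc⟩⟩ hv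
      · rw [h]
      · rw [h]; norm_num
  have main : ∀ u v : V, G.Adj u v → (x u = 0 ∧ u ∉ C) → 1 ≤ x' u + x' v := by
    intro u v huv hu
    have hvC : v ∈ C := (hC huv).resolve_left hu.2
    have hxv : 1 ≤ x v := by have := hxf huv; rw [hu.1] at this; linarith
    have hxv1 : x v = 1 := by
      rcases hhalf v with h | h | h
      · rw [h] at hxv; linarith
      · rw [h] at hxv; linarith
      · exact h
    have h1 : ¬(x v = 0 ∧ v ∈ C) := by rw [hxv1]; norm_num
    have h2 : ¬(x v = 1 ∧ v ∉ C) := fun h => h.2 hvC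
    have hx'v : x' v = 1 := by
      simp only [hx']; rw [if_neg h1, if_neg h2]; exact hxv1
    have h3 : ¬(x u = 0 ∧ u ∈ C) := fun h => hu.2 h.2
    have h4 : ¬(x u = 1 ∧ u ∉ C) := by rw [hu.1]; norm_num
    have hx'u : x' u = 0 := by
      simp only [hx']; rw [if_neg h3, if_neg h4]; exact hu.1
    rw [hx'u, hx'v]; norm_num
  have hfeas : ∀ ⦃u v : V⦄, G.Adj u v → 1 ≤ x' u + x' v := by
    intro u v huv
    by_cases hu : x u = 0 ∧ u ∉ C
    · exact main u v huv hu
    · by_cases hv : x v = 0 ∧ v ∉ C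
      · have := main v u huv.symm hv; linarith
      · have := hhalfge u hu; have := hhalfge v hv; linarith
  have hle : LPval G w ≤ ∑ v, w v * x' v := by
    apply csInf_le
    · refine ⟨0, ?_⟩
      rintro t ⟨z, hz0, hzf, rfl⟩
      exact Finset.sum_nonneg fun v _ => mul_nonneg (hw v) (hz0 v)
    · exact ⟨x', hx'0, hfeas, rfl⟩
  have hpt : ∀ v : V, w v * x' v - w v * x v =
      (if x v = 0 ∧ v ∈ C then w v / 2 else 0)
        - (if x v = 1 ∧ v ∉ C then w v / 2 else 0) := by
    intro v; simp only [hx']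
    by_cases h1 : x v = 0 ∧ v ∈ C
    · have h2 : ¬(x v = 1 ∧ v ∉ C) := by
        rintro ⟨h, -⟩; rw [h1.1] at h; norm_num at h
      simp only [if_pos h1, if_neg h2]; rw [h1.1]; ring
    · by_cases h2 : x v = 1 ∧ v ∉ C
      · simp only [if_neg h1, if_pos h2]; rw [h2.1]; ring
      · simp only [if_neg h1, if_neg h2]; ring
  have hsum : ∑ v, (w v * x' v - w v * x v) =
      ∑ v ∈ univ.filter (fun v => x v = 0 ∧ v ∈ C), w v / 2
        - ∑ v ∈ univ.filter (fun v => x v = 1 ∧ v ∉ C), w v / 2 := by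
    rw [Finset.sum_filter, Finset.sum_filter, ← Finset.sum_sub_distrib]
    exact Finset.sum_congr rfl fun v _ => hpt v
  rw [Finset.sum_sub_distrib] at hsum
  have e1 : ∑ v ∈ univ.filter (fun v => x v = 0 ∧ v ∈ C), w v / 2
      = (∑ v ∈ univ.filter (fun v => x v = 0 ∧ v ∈ C), w v) / 2 := by
    rw [Finset.sum_div]
  have e2 : ∑ v ∈ univ.filter (fun v => x v = 1 ∧ v ∉ C), w v / 2
      = (∑ v ∈ univ.filter (fun v => x v = 1 ∧ v ∉ C), w v) / 2 := by
    rw [Finset.sum_div]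
  rw [e1, e2] at hsum
  linarith [hsum, hle, hopt]

open scoped Classical in
/-- Nemhauser–Trotter: if `x` is a half-integral optimal LP solution, then
`OPT(G_{1/2}, w) = OPT(G, w) - w(V₁)`. -/
theorem opt_half_subgraph_eq {V : Type*} [Fintype V] [DecidableEq V]
    (G : SimpleGraph V) (w : V → ℝ) (hw : ∀ v, 0 ≤ w v)
    (x : V → ℝ) (hx0 : ∀ v, 0 ≤ x v)
    (hxf : ∀ ⦃u v : V⦄, G.Adj u v → 1 ≤ x u + x v)
    (hhalf : ∀ v, x v = 0 ∨ x v = 1/2 ∨ x v = 1)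
    (hopt : ∑ v, w v * x v = LPval G w) :
    OPT (Gdel G {v | x v ≠ 1/2}) w
      = OPT G w - ∑ v ∈ Finset.univ.filter (fun v => x v = 1), w v := by
  classical
  set S : Set V := {v | x v ≠ 1/2} with hS
  set V1 : Finset V := univ.filter (fun v => x v = 1) with hV1
  set w1 : ℝ := ∑ v ∈ V1, w v with hw1
  have bddA : BddBelow {t : ℝ | ∃ C : Finset V, IsVC G C ∧ t = ∑ v ∈ C, w v} := by
    refine ⟨0, ?_⟩
    rintro t ⟨C, hC, rfl⟩
    exact Finset.sum_nonneg fun v _ => hw v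
  have bddB : BddBelow {t : ℝ | ∃ C : Finset V, IsVC (Gdel G S) C ∧ t = ∑ v ∈ C, w v} := by
    refine ⟨0, ?_⟩
    rintro t ⟨C, hC, rfl⟩
    exact Finset.sum_nonneg fun v _ => hw v
  have neA : {t : ℝ | ∃ C : Finset V, IsVC G C ∧ t = ∑ v ∈ C, w v}.Nonempty :=
    ⟨_, univ, fun u v _ => Or.inl (mem_univ u), rfl⟩
  have neB : {t : ℝ | ∃ C : Finset V, IsVC (Gdel G S) C ∧ t = ∑ v ∈ C, w v}.Nonempty :=
    ⟨_, univ, fun u v _ => Or.inl (mem_univ u), rfl⟩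
  unfold OPT
  apply le_antisymm
  · -- sInf SB ≤ sInf SA - w1
    rw [le_sub_iff_add_le]
    apply le_csInf neA
    rintro t ⟨C, hC, rfl⟩
    -- the cover of the half graph
    have hVC' : IsVC (Gdel G S) (C.filter (fun v => x v = 1/2)) := by
      intro u v huv
      rw [gdel_adj'] at huv
      obtain ⟨hadj, hu, hv⟩ := huv
      simp only [hS, Set.mem_setOf_eq, not_not] at hu hv
      rcases hC hadj with h | h
      · exact Or.inl (mem_filter.2 ⟨h, hu⟩)
      · exact Or.inr (mem_filter.2 ⟨h, hv⟩)
    have hmem : (∑ v ∈ C.filter (fun v => x v = 1/2), w v) ∈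
        {t : ℝ | ∃ C : Finset V, IsVC (Gdel G S) C ∧ t = ∑ v ∈ C, w v} :=
      ⟨_, hVC', rfl⟩
    have hinf := csInf_le bddB hmem
    -- partition of C
    have hsplitC : ∑ v ∈ C, w v = ∑ v ∈ C.filter (fun v => x v = 1/2), w v
        + (∑ v ∈ C.filter (fun v => x v = 0), w v + ∑ v ∈ C.filter (fun v => x v = 1), w v) := by
      rw [← Finset.sum_filter_add_sum_filter_not C (fun v => x v = 1/2)]
      congr 1
      rw [← Finset.sum_filter_add_sum_filter_not (C.filter (fun v => ¬ x v = 1/2)) (fun v => x v = 0)]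
      congr 1
      · apply Finset.sum_congr _ (fun _ _ => rfl)
        ext v
        simp only [mem_filter]
        constructor
        · rintro ⟨⟨h1, _⟩, h3⟩; exact ⟨h1, h3⟩
        · rintro ⟨h1, h2⟩; refine ⟨⟨h1, ?_⟩, h2⟩; rw [h2]; norm_num
      · apply Finset.sum_congr _ (fun _ _ => rfl)
        ext v
        simp only [mem_filter]
        constructor
        · rintro ⟨⟨h1, h2⟩, h3⟩
          exact ⟨h1, ((hhalf v).resolve_left h3).resolve_left h2⟩
        · rintro ⟨h1, h2⟩
          refine ⟨⟨h1, ?_⟩, ?_⟩ <;> rw [h2] <;> norm_num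
    -- partition of V1
    have hsplit1 : w1 = ∑ v ∈ C.filter (fun v => x v = 1), w v
        + ∑ v ∈ univ.filter (fun v => x v = 1 ∧ v ∉ C), w v := by
      rw [hw1, hV1, ← Finset.sum_filter_add_sum_filter_not (univ.filter (fun v => x v = 1)) (fun v => v ∈ C)]
      congr 1
      · apply Finset.sum_congr _ (fun _ _ => rfl)
        ext v; simp only [mem_filter, mem_univ, true_and]; tauto
      · apply Finset.sum_congr _ (fun _ _ => rfl)
        rw [Finset.filter_filter]
    have hkey := nt_key G w hw x hx0 hxf hhalf hopt C hC
    have e0 : univ.filter (fun v => x v = 0 ∧ v ∈ C) = C.filter (fun v => x v = 0) := by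
      ext v; simp only [mem_filter, mem_univ, true_and]; tauto
    rw [e0] at hkey
    linarith [hinf]
  · -- sInf SA - w1 ≤ sInf SB
    apply le_csInf neB
    rintro t ⟨D, hD, rfl⟩
    have hx1le : ∀ v, x v ≤ 1 := by
      intro v; rcases hhalf v with h | h | h <;> rw [h] <;> norm_num
    have hVC'' : IsVC G (D ∪ V1) := by
      intro u v huv
      by_cases hu1 : x u = 1
      · exact Or.inl (mem_union_right _ (mem_filter.2 ⟨mem_univ u, hu1⟩))
      by_cases hv1 : x v = 1
      · exact Or.inr (mem_union_right _ (mem_filter.2 ⟨mem_univ v, hv1⟩))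
      have hxu : x u = 1/2 := by
        rcases hhalf u with h | h | h
        · exfalso
          have := hxf huv
          rw [h] at this
          have := hx1le v
          rcases hhalf v with h' | h' | h' <;> rw [h'] at this <;> first | linarith | exact hv1 h'
        · exact h
        · exact absurd h hu1
      have hxv : x v = 1/2 := by
        rcases hhalf v with h | h | h
        · exfalso
          have := hxf huv
          rw [h] at this
          rcases hhalf u with h' | h' | h' <;> rw [h'] at this <;> first | linarith | exact hu1 h'
        · exact h
        · exact absurd h hv1
      have hadj : (Gdel G S).Adj u v := by
        rw [gdel_adj']
        refine ⟨huv, ?_, ?_⟩ <;> simp [hS, hxu, hxv]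
      rcases hD hadj with h | h
      · exact Or.inl (mem_union_left _ h)
      · exact Or.inr (mem_union_left _ h)
    have hmem : (∑ v ∈ D ∪ V1, w v) ∈
        {t : ℝ | ∃ C : Finset V, IsVC G C ∧ t = ∑ v ∈ C, w v} := ⟨_, hVC'', rfl⟩
    have hinf := csInf_le bddA hmem
    have hsum : ∑ v ∈ D ∪ V1, w v ≤ ∑ v ∈ D, w v + w1 := by
      have hu : D ∪ V1 = D ∪ (V1 \ D) := by rw [Finset.union_sdiff_self_eq_union]
      rw [hu, Finset.sum_union Finset.disjoint_sdiff]
      have : ∑ v ∈ V1 \ D, w v ≤ w1 :=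
        Finset.sum_le_sum_of_subset_of_nonneg (Finset.sdiff_subset) (fun v _ _ => hw v)
      linarith
    linarith [hinf]
end

section
/- Let G = (V,E) be a finite simple graph with nonnegative vertex weights w, let x* : V → {0, 1/2, 1} be a feasible solution of the standard LP relaxation attaining its optimal value LP(G,w), set V_α = {v ∈ V : x*(v) = α}, and let G_{1/2} be the subgraph induced by V_{1/2}. If U ⊆ V_{1/2} is a vertex cover of G_{1/2} and φ ≥ 1 is a real number with w(U) ≤ φ · OPT(G_{1/2}, w), then w(U) + w(V_1) ≤ φ · OPT(G, w). -/
open Finset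

open scoped Classical in
/-- a `φ`-approximate cover of `G_{1/2}` together with `V₁` gives a
`φ`-approximate cover of `G`. -/
theorem round_half_approx {V : Type*} [Fintype V] [DecidableEq V]
    (G : SimpleGraph V) (w : V → ℝ) (hw : ∀ v, 0 ≤ w v)
    (x : V → ℝ) (hx0 : ∀ v, 0 ≤ x v)
    (hxf : ∀ ⦃u v : V⦄, G.Adj u v → 1 ≤ x u + x v)
    (hhalf : ∀ v, x v = 0 ∨ x v = 1/2 ∨ x v = 1)
    (hopt : ∑ v, w v * x v = LPval G w)
    (U : Finset V) (hUhalf : ∀ u ∈ U, x u = 1/2)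
    (hUcov : IsVC (Gdel G {v | x v ≠ 1/2}) U)
    (φ : ℝ) (hφ : 1 ≤ φ)
    (hUapx : ∑ v ∈ U, w v ≤ φ * OPT (Gdel G {v | x v ≠ 1/2}) w) :
    ∑ v ∈ U, w v + ∑ v ∈ Finset.univ.filter (fun v => x v = 1), w v ≤ φ * OPT G w := by

  classical
  set S : Set V := {v | x v ≠ 1/2} with hS
  have key : ∀ C : Finset V, IsVC G C →
      OPT (Gdel G S) w + ∑ v ∈ Finset.univ.filter (fun v => x v = 1), w v ≤ ∑ v ∈ C, w v := by
    intro C hC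
    set A : Finset V := C.filter (fun v => x v = 0) with hA
    set B : Finset V := Finset.univ.filter (fun v => x v = 1 ∧ v ∉ C) with hB
    set Ch : Finset V := C.filter (fun v => x v = 1/2) with hCh
    set C1 : Finset V := C.filter (fun v => x v = 1) with hC1
    set V1 : Finset V := Finset.univ.filter (fun v => x v = 1) with hV1
    set x' : V → ℝ := fun v => if v ∈ A ∪ B then 1/2 else x v with hx'
    have hx'0 : ∀ v, 0 ≤ x' v := by
      intro v
      simp only [hx']
      split
      · norm_num
      · exact hx0 v
    have hge : ∀ v, 1/2 ≤ x v → 1/2 ≤ x' v := by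
      intro v hv
      simp only [hx']
      split
      · norm_num
      · exact hv
    -- feasibility of x'
    have zero_case : ∀ u v : V, G.Adj u v → x u = 0 → 1 ≤ x' u + x' v := by
      intro u v huv hu0
      have hv1 : x v = 1 := by
        have h1 := hxf huv
        rw [hu0, zero_add] at h1
        rcases hhalf v with h | h | h
        · rw [h] at h1; norm_num at h1
        · rw [h] at h1; norm_num at h1
        · exact h
      by_cases hvC : v ∈ C
      · have hvAB : v ∉ A ∪ B := by
          rw [Finset.mem_union]
          rintro (h | h)
          · have := (Finset.mem_filter.mp h).2
            rw [hv1] at this; norm_num at this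
          · exact (Finset.mem_filter.mp h).2.2 hvC
        have : x' v = 1 := by
          simp only [hx']
          rw [if_neg hvAB, hv1]
        rw [this]
        have := hx'0 u
        linarith
      · have huC : u ∈ C := by
          rcases hC huv with h | h
          · exact h
          · exact absurd h hvC
        have huA : u ∈ A ∪ B := Finset.mem_union_left _ (by
          simp only [hA, Finset.mem_filter]; exact ⟨huC, hu0⟩)
        have hvB : v ∈ A ∪ B := Finset.mem_union_right _ (by
          simp only [hB, Finset.mem_filter, Finset.mem_univ]; exact ⟨trivial, hv1, hvC⟩)
        simp only [hx']
        rw [if_pos huA, if_pos hvB]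
        norm_num
    have hx'f : ∀ ⦃u v : V⦄, G.Adj u v → 1 ≤ x' u + x' v := by
      intro u v huv
      rcases hhalf u with hu | hu | hu
      · exact zero_case u v huv hu
      · rcases hhalf v with hv | hv | hv
        · have := zero_case v u huv.symm hv
          linarith
        · have h1 := hge u (by rw [hu])
          have h2 := hge v (by rw [hv])
          linarith
        · have h1 := hge u (by rw [hu])
          have h2 := hge v (by rw [hv]; norm_num)
          linarith
      · rcases hhalf v with hv | hv | hv
        · have := zero_case v u huv.symm hv
          linarith
        · have h1 := hge u (by rw [hu]; norm_num)
          have h2 := hge v (by rw [hv])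
          linarith
        · have h1 := hge u (by rw [hu]; norm_num)
          have h2 := hge v (by rw [hv]; norm_num)
          linarith
    -- LP optimality gives sum over B ≤ sum over A
    have hLPbdd : BddBelow {t : ℝ | ∃ z : V → ℝ, (∀ v, 0 ≤ z v) ∧
        (∀ ⦃u v : V⦄, G.Adj u v → 1 ≤ z u + z v) ∧ t = ∑ v, w v * z v} := by
      refine ⟨0, ?_⟩
      rintro t ⟨z, hz0, -, rfl⟩
      exact Finset.sum_nonneg fun v _ => mul_nonneg (hw v) (hz0 v)
    have hLP : LPval G w ≤ ∑ v, w v * x' v :=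
      csInf_le hLPbdd ⟨x', hx'0, hx'f, rfl⟩
    have hABdisj : Disjoint A B := by
      rw [Finset.disjoint_left]
      intro a ha hb
      simp only [hA, hB, Finset.mem_filter] at ha hb
      exact hb.2.2 ha.1
    have hptwise : ∀ v : V, w v * x' v = w v * x v +
        (if v ∈ A then w v / 2 else 0) - (if v ∈ B then w v / 2 else 0) := by
      intro v
      by_cases hvA : v ∈ A
      · have hvB : v ∉ B := fun h => (Finset.disjoint_left.mp hABdisj hvA) h
        have hx0v : x v = 0 := (Finset.mem_filter.mp hvA).2
        simp only [hx']
        rw [if_pos (Finset.mem_union_left _ hvA), if_pos hvA, if_neg hvB, hx0v]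
        ring
      · by_cases hvB : v ∈ B
        · have hx1v : x v = 1 := ((Finset.mem_filter.mp hvB).2).1
          simp only [hx']
          rw [if_pos (Finset.mem_union_right _ hvB), if_neg hvA, if_pos hvB, hx1v]
          ring
        · have : v ∉ A ∪ B := by
            rw [Finset.mem_union]
            tauto
          simp only [hx']
          rw [if_neg this, if_neg hvA, if_neg hvB]
          ring
    have hsum : ∑ v, w v * x' v = ∑ v, w v * x v +
        (∑ v ∈ A, w v) / 2 - (∑ v ∈ B, w v) / 2 := by
      rw [Finset.sum_congr rfl (fun v _ => hptwise v)]
      rw [Finset.sum_sub_distrib, Finset.sum_add_distrib]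
      rw [Finset.sum_ite_mem, Finset.sum_ite_mem, Finset.univ_inter, Finset.univ_inter]
      rw [Finset.sum_div, Finset.sum_div]
    have hBA : ∑ v ∈ B, w v ≤ ∑ v ∈ A, w v := by
      rw [hopt] at hsum
      linarith
    -- Ch is a vertex cover of Gdel G S
    have hChcov : IsVC (Gdel G S) Ch := by
      intro u v hadj
      rw [Gdel, SimpleGraph.fromRel_adj] at hadj
      obtain ⟨-, hr⟩ := hadj
      have huv : G.Adj u v ∧ x u = 1/2 ∧ x v = 1/2 := by
        rcases hr with ⟨hg, hu, hv⟩ | ⟨hg, hv, hu⟩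
        · exact ⟨hg, not_not.mp hu, not_not.mp hv⟩
        · exact ⟨hg.symm, not_not.mp hu, not_not.mp hv⟩
      rcases hC huv.1 with h | h
      · exact Or.inl (Finset.mem_filter.mpr ⟨h, huv.2.1⟩)
      · exact Or.inr (Finset.mem_filter.mpr ⟨h, huv.2.2⟩)
    have hOPTbdd : BddBelow {t : ℝ | ∃ D : Finset V, IsVC (Gdel G S) D ∧ t = ∑ v ∈ D, w v} := by
      refine ⟨0, ?_⟩
      rintro t ⟨D, -, rfl⟩
      exact Finset.sum_nonneg fun v _ => hw v
    have hOPTle : OPT (Gdel G S) w ≤ ∑ v ∈ Ch, w v :=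
      csInf_le hOPTbdd ⟨Ch, hChcov, rfl⟩
    -- split sums
    have hdisj1 : Disjoint A Ch := by
      rw [Finset.disjoint_left]
      intro a ha hb
      simp only [hA, hCh, Finset.mem_filter] at ha hb
      rw [ha.2] at hb
      norm_num at hb
    have hdisj2 : Disjoint (A ∪ Ch) C1 := by
      rw [Finset.disjoint_left]
      intro a ha hb
      simp only [hA, hCh, hC1, Finset.mem_union, Finset.mem_filter] at ha hb
      rcases ha with ha | ha <;> rw [ha.2] at hb <;> norm_num at hb
    have hsub : A ∪ Ch ∪ C1 ⊆ C := by
      intro a ha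
      simp only [hA, hCh, hC1, Finset.mem_union, Finset.mem_filter] at ha
      tauto
    have hsplitC : ∑ v ∈ A, w v + ∑ v ∈ Ch, w v + ∑ v ∈ C1, w v ≤ ∑ v ∈ C, w v := by
      have h := Finset.sum_le_sum_of_subset_of_nonneg hsub (fun v _ _ => hw v)
      rw [Finset.sum_union hdisj2, Finset.sum_union hdisj1] at h
      exact h
    have hsplitV1 : ∑ v ∈ V1, w v = ∑ v ∈ C1, w v + ∑ v ∈ B, w v := by
      rw [← Finset.sum_filter_add_sum_filter_not V1 (fun v => v ∈ C) w]
      congr 1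
      · congr 1
        ext a
        simp only [hV1, hC1, Finset.mem_filter, Finset.mem_univ, true_and]
        tauto
      · congr 1
        ext a
        simp only [hV1, hB, Finset.mem_filter, Finset.mem_univ, true_and]
    linarith
  -- conclude
  have hV1nonneg : 0 ≤ ∑ v ∈ Finset.univ.filter (fun v => x v = 1), w v :=
    Finset.sum_nonneg fun v _ => hw v
  have hne1 : {t : ℝ | ∃ C : Finset V, IsVC (Gdel G S) C ∧ t = ∑ v ∈ C, w v}.Nonempty :=
    ⟨∑ v ∈ (Finset.univ : Finset V), w v, Finset.univ,
      fun u v _ => Or.inl (Finset.mem_univ u), rfl⟩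
  have hne2 : {t : ℝ | ∃ C : Finset V, IsVC G C ∧ t = ∑ v ∈ C, w v}.Nonempty :=
    ⟨∑ v ∈ (Finset.univ : Finset V), w v, Finset.univ,
      fun u v _ => Or.inl (Finset.mem_univ u), rfl⟩
  have hOPT0 : 0 ≤ OPT (Gdel G S) w := by
    apply le_csInf hne1
    rintro t ⟨D, -, rfl⟩
    exact Finset.sum_nonneg fun v _ => hw v
  have hOPTG : OPT (Gdel G S) w + ∑ v ∈ Finset.univ.filter (fun v => x v = 1), w v
      ≤ OPT G w := by
    apply le_csInf hne2
    rintro t ⟨D, hD, rfl⟩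
    exact key D hD
  calc ∑ v ∈ U, w v + ∑ v ∈ Finset.univ.filter (fun v => x v = 1), w v
      ≤ φ * OPT (Gdel G S) w + φ * ∑ v ∈ Finset.univ.filter (fun v => x v = 1), w v := by
        have := le_mul_of_one_le_left hV1nonneg hφ
        linarith [hUapx]
    _ = φ * (OPT (Gdel G S) w + ∑ v ∈ Finset.univ.filter (fun v => x v = 1), w v) := by ring
    _ ≤ φ * OPT G w := by
        apply mul_le_mul_of_nonneg_left hOPTG
        linarith
end

section
/- Let G = (V,E) be a finite simple graph and w : V → ℝ≥0. The constant solution x(v) = 1/2 for all v ∈ V is an optimal solution of the standard LP relaxation, i.e. LP(G,w) = w(V)/2, if and only if there exists a dual certificate for w, i.e. a function y : E → ℝ≥0 with y(δ(v)) = w(v) for every v ∈ V. -/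
open Finset

/-! The constant vector `1/2` is always feasible, so `LP(G,w) ≤ w(V)/2`. A certificate `y` gives
the reverse inequality by weak duality: for feasible `x`,
`∑ w x = ∑_{uv ∈ E} y(uv) (x u + x v) ≥ ∑ y = w(V)/2`.

Conversely, with `A` the vertex-edge incidence matrix, let `y₀` minimise `‖w - A y‖²` over
nonnegative weights on the edges (a minimiser exists since the objective is coercive there).
The first-order conditions for the residual `z = w - A y₀` are `z u + z v ≤ 0` on every edge and
`z ⬝ A y₀ = 0`, so `z ⬝ w = ‖z‖² > 0` unless `y₀` is a certificate. Then `1/2 - ε z` is feasible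
for small `ε > 0` and has value `w(V)/2 - ε (z ⬝ w) < w(V)/2`. -/

open Matrix Filter Topology

section LeastSquares

variable {ι κ : Type*} [Fintype ι] [Fintype κ] (A : Matrix κ ι ℝ) (b : κ → ℝ)

lemma residual_add_smul_dotProduct_self (y d : ι → ℝ) (t : ℝ) :
    (b - A *ᵥ (y + t • d)) ⬝ᵥ (b - A *ᵥ (y + t • d)) =
      (b - A *ᵥ y) ⬝ᵥ (b - A *ᵥ y) - 2 * t * ((b - A *ᵥ y) ⬝ᵥ (A *ᵥ d)) +
        t ^ 2 * ((A *ᵥ d) ⬝ᵥ (A *ᵥ d)) := by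
  rw [mulVec_add, mulVec_smul, sub_add_eq_sub_sub]
  simp only [sub_dotProduct, dotProduct_sub, smul_dotProduct, dotProduct_smul, smul_eq_mul]
  rw [dotProduct_comm (A *ᵥ d) b, dotProduct_comm (A *ᵥ d) (A *ᵥ y)]
  ring

lemma nonneg_of_forall_mem_Ioo_nonneg_add_mul {a c : ℝ}
    (h : ∀ t ∈ Set.Ioo (0 : ℝ) 1, 0 ≤ a + c * t) : 0 ≤ a := by
  have hlim : Tendsto (fun t => a + c * t) (𝓝[>] 0) (𝓝 a) := by
    simpa using ((by fun_prop : Continuous fun t : ℝ => a + c * t).tendsto 0).mono_left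
      nhdsWithin_le_nhds
  exact ge_of_tendsto hlim (eventually_of_mem (Ioo_mem_nhdsGT one_pos) h)

variable {A b} {K : Set (ι → ℝ)} {y₀ : ι → ℝ}

lemma residual_dotProduct_mulVec_nonpos_of_isMinOn
    (hmin : IsMinOn (fun y => (b - A *ᵥ y) ⬝ᵥ (b - A *ᵥ y)) K y₀) {d : ι → ℝ}
    (hd : ∀ t ∈ Set.Ioo (0 : ℝ) 1, y₀ + t • d ∈ K) : (b - A *ᵥ y₀) ⬝ᵥ (A *ᵥ d) ≤ 0 := by
  suffices 0 ≤ -2 * ((b - A *ᵥ y₀) ⬝ᵥ (A *ᵥ d)) by linarith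
  refine nonneg_of_forall_mem_Ioo_nonneg_add_mul (c := (A *ᵥ d) ⬝ᵥ (A *ᵥ d)) fun t ht => ?_
  have hle : (b - A *ᵥ y₀) ⬝ᵥ (b - A *ᵥ y₀) ≤
      (b - A *ᵥ (y₀ + t • d)) ⬝ᵥ (b - A *ᵥ (y₀ + t • d)) := hmin (hd t ht)
  rw [residual_add_smul_dotProduct_self] at hle
  refine nonneg_of_mul_nonneg_right ?_ ht.1
  linarith

lemma residual_dotProduct_of_isMinOn_pointedCone {K : PointedCone ℝ (ι → ℝ)} (hy₀ : y₀ ∈ K)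
    (hmin : IsMinOn (fun y => (b - A *ᵥ y) ⬝ᵥ (b - A *ᵥ y)) K y₀) :
    (∀ d ∈ K, (b - A *ᵥ y₀) ⬝ᵥ (A *ᵥ d) ≤ 0) ∧ (b - A *ᵥ y₀) ⬝ᵥ (A *ᵥ y₀) = 0 := by
  have hdir : ∀ d ∈ K, (b - A *ᵥ y₀) ⬝ᵥ (A *ᵥ d) ≤ 0 := fun d hd =>
    residual_dotProduct_mulVec_nonpos_of_isMinOn hmin fun t ht =>
      K.add_mem hy₀ (K.smul_mem ht.1.le hd)
  have hshrink : (b - A *ᵥ y₀) ⬝ᵥ (A *ᵥ -y₀) ≤ 0 := by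
    refine residual_dotProduct_mulVec_nonpos_of_isMinOn hmin fun t ht => ?_
    have : y₀ + t • -y₀ = (1 - t) • y₀ := by module
    exact this ▸ K.smul_mem (sub_nonneg.2 ht.2.le) hy₀
  rw [mulVec_neg, dotProduct_neg] at hshrink
  exact ⟨hdir, le_antisymm (hdir y₀ hy₀) (neg_nonpos.1 hshrink)⟩

end LeastSquares

namespace SimpleGraph

variable {V : Type*} (G : SimpleGraph V)

def edgeWeightCone : PointedCone ℝ (Sym2 V → ℝ) where
  carrier := {y | (∀ e, 0 ≤ y e) ∧ ∀ e ∉ G.edgeSet, y e = 0}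
  add_mem' hy hy' := ⟨fun e => add_nonneg (hy.1 e) (hy'.1 e),
    fun e he => by simp [hy.2 e he, hy'.2 e he]⟩
  zero_mem' := ⟨fun _ => le_rfl, fun _ _ => rfl⟩
  smul_mem' c y hy := ⟨fun e => mul_nonneg c.2 (hy.1 e), fun e he => by simp [hy.2 e he]⟩

variable {G} in
lemma mem_edgeWeightCone {y : Sym2 V → ℝ} :
    y ∈ G.edgeWeightCone ↔ (∀ e, 0 ≤ y e) ∧ ∀ e ∉ G.edgeSet, y e = 0 :=
  Iff.rfl

lemma isClosed_edgeWeightCone : IsClosed (G.edgeWeightCone : Set (Sym2 V → ℝ)) := by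
  show IsClosed {y : Sym2 V → ℝ | (∀ e, 0 ≤ y e) ∧ ∀ e ∉ G.edgeSet, y e = 0}
  simp only [Set.ofPred_and, Set.ofPred_forall]
  exact (isClosed_iInter fun e => isClosed_le continuous_const (continuous_apply e)).inter
    (isClosed_iInter fun e => isClosed_iInter fun _ => isClosed_eq (continuous_apply e)
      continuous_const)

variable [Fintype V] [DecidableEq V] [DecidableRel G.Adj]

lemma vecMul_incMatrix_of_adj (x : V → ℝ) {u v : V} (h : G.Adj u v) :
    (x ᵥ* G.incMatrix ℝ) s(u, v) = x u + x v := by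
  simp [vecMul, dotProduct, incMatrix_apply', mk'_mem_incidenceSet_iff, h, Finset.sum_ite,
    Finset.filter_or, Finset.filter_eq', Finset.sum_pair h.ne]

lemma le_incMatrix_mulVec {y : Sym2 V → ℝ} (hy : y ∈ G.edgeWeightCone) {u v : V} (h : G.Adj u v) :
    y s(u, v) ≤ (G.incMatrix ℝ *ᵥ y) u := by
  have hnonneg : ∀ e, 0 ≤ G.incMatrix ℝ u e * y e := fun e =>
    mul_nonneg (by rw [incMatrix_apply']; split_ifs <;> norm_num) (hy.1 e)
  have := single_le_sum (fun e _ => hnonneg e) (mem_univ s(u, v))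
  simpa [incMatrix_apply', h, mulVec, dotProduct] using this

lemma exists_isMinOn_residual (w : V → ℝ) :
    ∃ y₀ ∈ G.edgeWeightCone, IsMinOn (fun y => (w - G.incMatrix ℝ *ᵥ y) ⬝ᵥ (w - G.incMatrix ℝ *ᵥ y))
      G.edgeWeightCone y₀ := by
  set f := fun y => (w - G.incMatrix ℝ *ᵥ y) ⬝ᵥ (w - G.incMatrix ℝ *ᵥ y)
  have hf : Continuous f := by fun_prop
  refine hf.continuousOn.exists_isMinOn' G.isClosed_edgeWeightCone G.edgeWeightCone.zero_mem ?_
  rw [eventually_inf_principal, hasBasis_cocompact.eventually_iff]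
  -- An edge weight above `M` pushes a residual entry below `-(w ⬝ᵥ w + 1)`.
  set M := w ⬝ᵥ w + ‖w‖ + 1
  have hww : 0 ≤ w ⬝ᵥ w := Finset.sum_nonneg fun v _ => mul_self_nonneg (w v)
  have hM : 0 ≤ M := by positivity
  refine ⟨Metric.closedBall 0 M, isCompact_closedBall 0 M, fun y hyM hy => ?_⟩
  obtain ⟨e, he⟩ : ∃ e, M < y e := by
    by_contra! hle
    refine hyM (mem_closedBall_zero_iff.2 ((pi_norm_le_iff_of_nonneg hM).2 fun e => ?_))
    rw [Real.norm_of_nonneg (hy.1 e)]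
    exact hle e
  have heE : e ∈ G.edgeSet := by_contra fun heE => by linarith [hy.2 e heE]
  induction e using Sym2.ind with | _ u v =>
  have hload := G.le_incMatrix_mulVec hy heE
  have hwu : w u ≤ ‖w‖ := (le_abs_self _).trans (norm_le_pi_norm w u)
  have hterm : (w - G.incMatrix ℝ *ᵥ y) u * (w - G.incMatrix ℝ *ᵥ y) u ≤ f y :=
    single_le_sum (f := fun v => (w - G.incMatrix ℝ *ᵥ y) v * (w - G.incMatrix ℝ *ᵥ y) v)
      (fun v _ => mul_self_nonneg _) (mem_univ u)
  have hres : w ⬝ᵥ w + 1 ≤ (G.incMatrix ℝ *ᵥ y) u - w u := by linarith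
  simp only [f, mulVec_zero, sub_zero, Pi.sub_apply] at hterm ⊢
  nlinarith

variable {G}

lemma isDualCert_iff {w : V → ℝ} {y : Sym2 V → ℝ} :
    IsDualCert G w y ↔ y ∈ G.edgeWeightCone ∧ G.incMatrix ℝ *ᵥ y = w := by
  simp only [IsDualCert, ysum, mem_edgeWeightCone, funext_iff, mulVec, dotProduct, incMatrix_apply',
    ite_mul, one_mul, zero_mul, and_assoc]
  congr!

lemma exists_adj_add_nonpos_of_not_isDualCert {w : V → ℝ} (hno : ¬∃ y, IsDualCert G w y) :
    ∃ z : V → ℝ, (∀ ⦃u v⦄, G.Adj u v → z u + z v ≤ 0) ∧ 0 < z ⬝ᵥ w := by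
  obtain ⟨y₀, hy₀, hmin⟩ := exists_isMinOn_residual G w
  obtain ⟨hcone, horth⟩ := residual_dotProduct_of_isMinOn_pointedCone hy₀ hmin
  set z := w - G.incMatrix ℝ *ᵥ y₀
  refine ⟨z, fun u v h => ?_, ?_⟩
  · have hsingle : Pi.single s(u, v) 1 ∈ G.edgeWeightCone :=
      ⟨fun e => by rw [Pi.single_apply]; split_ifs <;> norm_num,
        fun e he => Pi.single_eq_of_ne (by rintro rfl; exact he h) _⟩
    have := hcone _ hsingle
    rwa [dotProduct_mulVec, dotProduct_single, mul_one, vecMul_incMatrix_of_adj G z h] at this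
  · have hz : z ≠ 0 := fun hz => hno ⟨y₀, isDualCert_iff.2 ⟨hy₀, (sub_eq_zero.1 hz).symm⟩⟩
    have hw_eq : w = z + G.incMatrix ℝ *ᵥ y₀ := (sub_add_cancel _ _).symm
    rw [hw_eq, dotProduct_add, horth, add_zero]
    exact lt_of_le_of_ne (Finset.sum_nonneg fun v _ => mul_self_nonneg (z v))
      (Ne.symm (dotProduct_self_eq_zero.not.2 hz))

lemma dotProduct_incMatrix_mulVec_le {y : Sym2 V → ℝ} (hy : y ∈ G.edgeWeightCone) {x x' : V → ℝ}
    (hxx' : ∀ ⦃u v⦄, G.Adj u v → x' u + x' v ≤ x u + x v) :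
    x' ⬝ᵥ (G.incMatrix ℝ *ᵥ y) ≤ x ⬝ᵥ (G.incMatrix ℝ *ᵥ y) := by
  rw [dotProduct_mulVec, dotProduct_mulVec]
  refine Finset.sum_le_sum fun e _ => ?_
  by_cases he : e ∈ G.edgeSet
  · induction e using Sym2.ind with | _ u v =>
    rw [vecMul_incMatrix_of_adj G x' he, vecMul_incMatrix_of_adj G x he]
    exact mul_le_mul_of_nonneg_right (hxx' he) (hy.1 _)
  · simp [hy.2 e he]

end SimpleGraph

section LPValue

open SimpleGraph

variable {V : Type*} [Fintype V] {G : SimpleGraph V} {w : V → ℝ}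

lemma LPval_le (hw : ∀ v, 0 ≤ w v) {x : V → ℝ} (hx₀ : ∀ v, 0 ≤ x v)
    (hx : ∀ ⦃u v⦄, G.Adj u v → 1 ≤ x u + x v) : LPval G w ≤ ∑ v, w v * x v :=
  csInf_le ⟨0, by rintro _ ⟨x, hx₀, -, rfl⟩; exact sum_nonneg fun v _ => mul_nonneg (hw v) (hx₀ v)⟩
    ⟨x, hx₀, hx, rfl⟩

lemma le_LPval {c : ℝ}
    (h : ∀ x : V → ℝ, (∀ v, 0 ≤ x v) → (∀ ⦃u v⦄, G.Adj u v → 1 ≤ x u + x v) →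
      c ≤ ∑ v, w v * x v) : c ≤ LPval G w :=
  le_csInf ⟨_, 1, fun _ => zero_le_one, fun _ _ _ => by norm_num, rfl⟩
    (by rintro _ ⟨x, hx₀, hx, rfl⟩; exact h x hx₀ hx)

lemma LPval_le_half (hw : ∀ v, 0 ≤ w v) : LPval G w ≤ (∑ v, w v) / 2 := by
  simpa [← Finset.sum_mul, div_eq_mul_inv] using
    LPval_le (G := G) hw (x := fun _ => 1 / 2) (fun _ => by norm_num) (fun _ _ _ => by norm_num)

lemma half_le_LPval_of_isDualCert [DecidableEq V] {y : Sym2 V → ℝ} (hy : IsDualCert G w y) :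
    (∑ v, w v) / 2 ≤ LPval G w := by
  classical
  obtain ⟨hyK, rfl⟩ := isDualCert_iff.1 hy
  refine le_LPval fun x _ hx => ?_
  have := dotProduct_incMatrix_mulVec_le hyK (x' := fun _ => 1 / 2) (x := x)
    (fun u v h => by linarith [hx h])
  simpa [dotProduct, ← Finset.mul_sum, mul_comm, div_eq_mul_inv] using this

lemma LPval_lt_half_of_adj_add_nonpos (hw : ∀ v, 0 ≤ w v) {z : V → ℝ}
    (hz : ∀ ⦃u v⦄, G.Adj u v → z u + z v ≤ 0) (hzw : 0 < z ⬝ᵥ w) :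
    LPval G w < (∑ v, w v) / 2 := by
  set ε := 1 / (2 * (‖z‖ + 1))
  have hε : 0 < ε := by positivity
  have hεz : ∀ v, ε * z v ≤ 1 / 2 := fun v => by
    have : z v ≤ ‖z‖ + 1 := by linarith [(le_abs_self _).trans (norm_le_pi_norm z v)]
    calc ε * z v ≤ ε * (‖z‖ + 1) := by gcongr
      _ = 1 / 2 := by simp only [ε]; field_simp
  calc LPval G w ≤ ∑ v, w v * (1 / 2 - ε * z v) :=
        LPval_le hw (fun v => by linarith [hεz v]) fun u v h => by nlinarith [hz h]
    _ = (∑ v, w v) / 2 - ε * (z ⬝ᵥ w) := by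
        simp only [dotProduct, mul_sub, Finset.sum_sub_distrib, Finset.mul_sum, Finset.sum_div]
        congr 1 <;> refine Finset.sum_congr rfl fun v _ => by ring
    _ < (∑ v, w v) / 2 := by linarith [mul_pos hε hzw]

end LPValue

/-- the constant `1/2` solution is LP-optimal iff `w` admits a dual
certificate. -/
theorem half_optimal_iff_dualCert {V : Type*} [Fintype V] [DecidableEq V]
    (G : SimpleGraph V) (w : V → ℝ) (hw : ∀ v, 0 ≤ w v) :
    LPval G w = (∑ v, w v) / 2 ↔ ∃ y : Sym2 V → ℝ, IsDualCert G w y := by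
  classical
  refine ⟨fun hLP => ?_, fun ⟨y, hy⟩ =>
    (LPval_le_half hw).antisymm (half_le_LPval_of_isDualCert hy)⟩
  by_contra hno
  obtain ⟨z, hz, hzw⟩ := G.exists_adj_add_nonpos_of_not_isDualCert hno
  exact (LPval_lt_half_of_adj_add_nonpos hw hz hzw).ne hLP
end

section
/- Let G = (V,E) be a finite simple graph and let Q^W be the set of all w : V → ℝ≥0 with w(V) = 2 admitting a dual certificate. For every edge {u,v} ∈ E, the vector χ_u + χ_v (where χ_z is the 0/1 indicator vector of vertex z) is an extreme point of Q^W: it lies in Q^W and cannot be written as (w¹ + w²)/2 for two distinct points w¹, w² ∈ Q^W. -/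
open Finset

lemma term_zero_of_wzero {V : Type*} [Fintype V] [DecidableEq V] (G : SimpleGraph V)
    (w : V → ℝ) (y : Sym2 V → ℝ) (hy : IsDualCert G w y)
    (z : V) (hwz : w z = 0) : ∀ e, e ∈ G.edgeSet → z ∈ e → y e = 0 := by
  classical
  obtain ⟨hy0, hyE, hyd⟩ := hy
  intro e heE hze
  have h0 : ysum y (fun e => e ∈ G.edgeSet ∧ z ∈ e) = 0 := by rw [hyd z, hwz]
  unfold ysum at h0
  rw [Finset.sum_eq_zero_iff_of_nonneg] at h0
  · have := h0 e (Finset.mem_univ e)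
    rwa [if_pos ⟨heE, hze⟩] at this
  · intro e _
    split_ifs with h
    · exact hy0 e
    · exact le_rfl

lemma unit_values {V : Type*} [Fintype V] [DecidableEq V] (G : SimpleGraph V)
    (u v : V) (huv : G.Adj u v) (w : V → ℝ) (hmem : memQW G w)
    (hz : ∀ z, z ≠ u → z ≠ v → w z = 0) : w u = 1 ∧ w v = 1 := by
  classical
  obtain ⟨hnn, hsum, y, hy⟩ := hmem
  have hzero : ∀ e, e ≠ s(u, v) → y e = 0 := by
    intro e he
    by_cases heE : e ∈ G.edgeSet
    · induction e using Sym2.ind with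
      | _ a b =>
        have hab : G.Adj a b := heE
        by_cases hau : a = u
        · -- a = u, so b ≠ v (else e = s(u,v)) and b ≠ u
          have hbv : b ≠ v := fun hbv => he (by rw [hau, hbv])
          have hbu : b ≠ u := fun hbu => hab.ne (hau.trans hbu.symm)
          exact term_zero_of_wzero G w y hy b (hz b hbu hbv) _ heE (by simp)
        · by_cases hav : a = v
          · have hbu : b ≠ u := fun hbu => he (by rw [hav, hbu, Sym2.eq_swap])
            have hbv : b ≠ v := fun hbv => hab.ne (hav.trans hbv.symm)
            exact term_zero_of_wzero G w y hy b (hz b hbu hbv) _ heE (by simp)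
          · exact term_zero_of_wzero G w y hy a (hz a hau hav) _ heE (by simp)
    · exact hy.2.1 e heE
  have hwu : w u = y s(u, v) := by
    rw [← hy.2.2 u]
    unfold ysum
    rw [Finset.sum_eq_single s(u, v) (fun e _ hne => by simp [hzero e hne])
      (fun h => absurd (Finset.mem_univ _) h)]
    rw [if_pos ⟨huv, by simp⟩]
  have hwv : w v = y s(u, v) := by
    rw [← hy.2.2 v]
    unfold ysum
    rw [Finset.sum_eq_single s(u, v) (fun e _ hne => by simp [hzero e hne])
      (fun h => absurd (Finset.mem_univ _) h)]
    rw [if_pos ⟨huv, by simp⟩]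
  have hsum2 : w u + w v = 2 := by
    have hsub : ∑ z ∈ ({u, v} : Finset V), w z = ∑ z, w z := by
      apply Finset.sum_subset (Finset.subset_univ _)
      intro x _ hx
      simp only [Finset.mem_insert, Finset.mem_singleton, not_or] at hx
      exact hz x hx.1 hx.2
    rw [Finset.sum_pair huv.ne] at hsub
    rw [hsub, hsum]
  constructor <;> linarith [hwu, hwv, hsum2]

/-- for each edge `{u,v}`, the vector `χ_u + χ_v` is an extreme point of
`Q^W`. -/
theorem edge_vector_extreme_point {V : Type*} [Fintype V] [DecidableEq V]
    (G : SimpleGraph V) (u v : V) (huv : G.Adj u v) :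
    memQW G (fun z => (if z = u then (1:ℝ) else 0) + (if z = v then (1:ℝ) else 0)) ∧
    ∀ w₁ w₂ : V → ℝ, memQW G w₁ → memQW G w₂ → w₁ ≠ w₂ →
      (fun z => (if z = u then (1:ℝ) else 0) + (if z = v then (1:ℝ) else 0)) ≠
        fun z => (w₁ z + w₂ z) / 2 := by
  classical
  constructor
  · refine ⟨fun z => by dsimp only; split_ifs <;> norm_num, ?_, ?_⟩
    · rw [Finset.sum_add_distrib]
      simp only [Finset.sum_ite_eq', Finset.mem_univ, if_true]
      norm_num
    · refine ⟨fun e => if e = s(u, v) then 1 else 0,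
        fun e => by dsimp only; split_ifs <;> norm_num,
        fun e he => by dsimp only; rw [if_neg]; rintro rfl; exact he huv, fun z => ?_⟩
      unfold ysum
      rw [Finset.sum_eq_single s(u, v)
        (fun e _ hne => by simp [hne]) (fun h => absurd (Finset.mem_univ _) h)]
      simp only [if_pos rfl, SimpleGraph.mem_edgeSet, Sym2.mem_iff]
      by_cases hzu : z = u
      · subst hzu
        rw [if_pos ⟨huv, Or.inl rfl⟩, if_pos rfl, if_neg huv.ne]
        norm_num
      · by_cases hzv : z = v
        · subst hzv
          rw [if_pos ⟨huv, Or.inr rfl⟩, if_neg hzu, if_pos rfl]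
          norm_num
        · rw [if_neg (fun h => h.2.elim hzu hzv), if_neg hzu, if_neg hzv]
          norm_num
  · intro w₁ w₂ h₁ h₂ hne heq
    have hzero : ∀ z, z ≠ u → z ≠ v → w₁ z = 0 ∧ w₂ z = 0 := by
      intro z hzu hzv
      have := congrFun heq z
      rw [if_neg hzu, if_neg hzv] at this
      have h1 := h₁.1 z
      have h2 := h₂.1 z
      constructor <;> linarith
    have hu1 := unit_values G u v huv w₁ h₁ (fun z hzu hzv => (hzero z hzu hzv).1)
    have hu2 := unit_values G u v huv w₂ h₂ (fun z hzu hzv => (hzero z hzu hzv).2)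
    apply hne
    funext z
    by_cases hzu : z = u
    · subst hzu; rw [hu1.1, hu2.1]
    · by_cases hzv : z = v
      · subst hzv; rw [hu1.2, hu2.2]
      · rw [(hzero z hzu hzv).1, (hzero z hzu hzv).2]
end

section
/- Let G = (V,E) be a finite non-bipartite simple graph of odd girth 2ρ−1 (ρ ≥ 2 an integer), and let v_p ∈ V be such that G∖v_p is bipartite with bipartition (A,B). Let L_0, L_1, …, L_l be a partition of V∖{v_p} such that: L_0 = N(v_p) ∩ A; L_i ⊆ A for even i and L_i ⊆ B for odd i; every edge of G∖v_p joins two consecutive layers L_i and L_{i+1}; and every neighbor of v_p lying in B belongs to a layer L_i with i ≥ 2ρ−3. Let w : V → ℝ≥0 admit a dual certificate y. Writing E' for the edge set of G∖v_p, δ_A(v_p) and δ_B(v_p) for the edges from v_p to A and to B respectively, and E[L_i, L_{i+1}] for the edges of G∖v_p between L_i and L_{i+1} (empty if an index exceeds l), one has OPT(G∖v_p, w) ≤ y(E') + min{ y(δ_A(v_p)), y(δ_B(v_p)), min_{1 ≤ j ≤ ρ−2} y(E[L_{2j−1}, L_{2j}]) } (for ρ = 2 the inner minimum over j is omitted). 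-/
open Finset

lemma key_bound {V : Type*} [Fintype V] [DecidableEq V] (G : SimpleGraph V) (v_p : V)
    (w : V → ℝ) (y : Sym2 V → ℝ) (hdc : IsDualCert G w y) (hw : ∀ v, 0 ≤ w v)
    (C : Finset V) (hC : IsVC (Gdel G {v_p}) C) (Q : Sym2 V → Prop)
    (hQ2 : ∀ a b : V, G.Adj a b → a ∈ C → b ∈ C →
      v_p ∉ (s(a, b) : Sym2 V) ∧ Q s(a, b))
    (hQ1 : ∀ a b : V, G.Adj a b → (a ∈ C ∨ b ∈ C) → v_p ∈ (s(a, b) : Sym2 V) →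
      Q s(a, b)) :
    OPT (Gdel G {v_p}) w ≤ ysum y (fun e => e ∈ G.edgeSet ∧ v_p ∉ e) +
      ysum y (fun e => e ∈ G.edgeSet ∧ Q e) := by
  classical
  obtain ⟨hy0, hyE, hyv⟩ := hdc
  have hOPT : OPT (Gdel G {v_p}) w ≤ ∑ v ∈ C, w v := by
    apply csInf_le
    · refine ⟨0, ?_⟩
      rintro t ⟨C', _, rfl⟩
      exact Finset.sum_nonneg fun v _ => hw v
    · exact ⟨C, hC, rfl⟩
  refine hOPT.trans ?_
  have hrw : ∑ v ∈ C, w v = ∑ v ∈ C, ysum y (fun e => e ∈ G.edgeSet ∧ v ∈ e) :=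
    Finset.sum_congr rfl fun v _ => (hyv v).symm
  rw [hrw]
  unfold ysum
  rw [Finset.sum_comm, ← Finset.sum_add_distrib]
  refine Finset.sum_le_sum fun e _ => ?_
  induction e using Sym2.ind with
  | _ a b =>
    beta_reduce
    by_cases he : s(a, b) ∈ G.edgeSet
    · have hadj : G.Adj a b := (SimpleGraph.mem_edgeSet G).mp he
      have hne : a ≠ b := hadj.ne
      have hy := hy0 (s(a, b))
      have hL : ∑ v ∈ C, (if s(a, b) ∈ G.edgeSet ∧ v ∈ (s(a, b) : Sym2 V)
            then y s(a, b) else 0)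
          = (if a ∈ C then y s(a, b) else 0) + (if b ∈ C then y s(a, b) else 0) := by
        have : ∀ v ∈ C, (if s(a, b) ∈ G.edgeSet ∧ v ∈ (s(a, b) : Sym2 V)
              then y s(a, b) else 0)
            = (if v = a then y s(a, b) else 0) + (if v = b then y s(a, b) else 0) := by
          intro v _
          by_cases hva : v = a <;> by_cases hvb : v = b
          · exact absurd (hva.symm.trans hvb) hne
          · simp [hva, hvb, he, Sym2.mem_iff, hne, Ne.symm hne]
          · simp [hva, hvb, he, Sym2.mem_iff, hne, Ne.symm hne]
          · simp [hva, hvb, he, Sym2.mem_iff, hne, Ne.symm hne]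
        rw [Finset.sum_congr rfl this, Finset.sum_add_distrib,
          Finset.sum_ite_eq' C a fun _ => y s(a, b),
          Finset.sum_ite_eq' C b fun _ => y s(a, b)]
      have hfinal : ((if a ∈ C then y s(a, b) else 0) + (if b ∈ C then y s(a, b) else 0) : ℝ)
          ≤ (if s(a, b) ∈ G.edgeSet ∧ v_p ∉ (s(a, b) : Sym2 V) then y s(a, b) else 0) +
            (if s(a, b) ∈ G.edgeSet ∧ Q s(a, b) then y s(a, b) else 0) := by
        by_cases hac : a ∈ C <;> by_cases hbc : b ∈ C
        · obtain ⟨hv, hQ⟩ := hQ2 a b hadj hac hbc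
          simp only [he, true_and]
          rw [if_pos hac, if_pos hbc, if_pos hv, if_pos hQ]
        · by_cases hvp : v_p ∈ (s(a, b) : Sym2 V)
          · have hQ := hQ1 a b hadj (Or.inl hac) hvp
            simp only [he, true_and]
            rw [if_pos hac, if_neg hbc, if_neg (not_not_intro hvp), if_pos hQ]
            linarith
          · simp only [he, true_and]
            rw [if_pos hac, if_neg hbc, if_pos hvp]
            split_ifs <;> linarith
        · by_cases hvp : v_p ∈ (s(a, b) : Sym2 V)
          · have hQ := hQ1 a b hadj (Or.inr hbc) hvp
            simp only [he, true_and]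
            rw [if_neg hac, if_pos hbc, if_neg (not_not_intro hvp), if_pos hQ]
          · simp only [he, true_and]
            rw [if_neg hac, if_pos hbc, if_pos hvp]
            split_ifs <;> linarith
        · simp only [he, true_and]
          rw [if_neg hac, if_neg hbc]
          split_ifs <;> linarith
      refine le_trans (le_of_eq (?_ :
        _ = ∑ v ∈ C, if s(a, b) ∈ G.edgeSet ∧ v ∈ (s(a, b) : Sym2 V)
          then y s(a, b) else 0)) ?_
      · congr!
      rw [hL]
      exact hfinal.trans (le_of_eq (by congr!))
    · simp [he]

/-- layered upper bound on `OPT(G ∖ v_p, w)` in terms of the dual values on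
`E'`, `δ_A(v_p)`, `δ_B(v_p)` and the inter-layer edge sets `E[L_{2j-1}, L_{2j}]`. -/
theorem opt_del_vp_layer_bound {V : Type*} [Fintype V] [DecidableEq V]
    (G : SimpleGraph V) (ρ : ℕ) (hρ : 2 ≤ ρ) (hog : HasOddGirth G (2 * ρ - 1))
    (v_p : V) (A B : Finset V)
    (hvpA : v_p ∉ A) (hvpB : v_p ∉ B) (hdisj : Disjoint A B)
    (hcover : ∀ v : V, v ≠ v_p → v ∈ A ∨ v ∈ B)
    (hbipA : ∀ ⦃a b : V⦄, G.Adj a b → a ∈ A → b ∈ A → False)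
    (hbipB : ∀ ⦃a b : V⦄, G.Adj a b → a ∈ B → b ∈ B → False)
    (L : ℕ → Finset V) (l : ℕ)
    (hvpL : ∀ i, v_p ∉ L i)
    (hpart : ∀ v : V, v ≠ v_p → ∃! i : ℕ, i ≤ l ∧ v ∈ L i)
    (hL0 : ∀ v : V, v ∈ L 0 ↔ v ∈ A ∧ G.Adj v_p v)
    (hLA : ∀ i, Even i → L i ⊆ A) (hLB : ∀ i, Odd i → L i ⊆ B)
    (hlayered : ∀ ⦃a b : V⦄, G.Adj a b → a ≠ v_p → b ≠ v_p →
      ∃ i : ℕ, i + 1 ≤ l ∧ ((a ∈ L i ∧ b ∈ L (i + 1)) ∨ (b ∈ L i ∧ a ∈ L (i + 1))))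
    (hNB : ∀ v ∈ B, G.Adj v_p v → ∀ i, v ∈ L i → 2 * ρ - 3 ≤ i)
    (w : V → ℝ) (hw : ∀ v, 0 ≤ w v) (y : Sym2 V → ℝ) (hdc : IsDualCert G w y) :
    (OPT (Gdel G {v_p}) w ≤
        ysum y (fun e => e ∈ G.edgeSet ∧ v_p ∉ e) +
          ysum y (fun e => e ∈ G.edgeSet ∧ ∃ a ∈ A, e = s(v_p, a))) ∧
    (OPT (Gdel G {v_p}) w ≤
        ysum y (fun e => e ∈ G.edgeSet ∧ v_p ∉ e) +
          ysum y (fun e => e ∈ G.edgeSet ∧ ∃ b ∈ B, e = s(v_p, b))) ∧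
    ∀ j : ℕ, 1 ≤ j → j ≤ ρ - 2 →
      OPT (Gdel G {v_p}) w ≤
        ysum y (fun e => e ∈ G.edgeSet ∧ v_p ∉ e) +
          ysum y (fun e => e ∈ G.edgeSet ∧
            ∃ a ∈ L (2 * j - 1), ∃ b ∈ L (2 * j), e = s(a, b)) := by
  classical
  have hGdel : ∀ u v : V, (Gdel G {v_p}).Adj u v →
      G.Adj u v ∧ u ≠ v_p ∧ v ≠ v_p := by
    intro u v huv
    simp only [Gdel, SimpleGraph.fromRel_adj, Set.mem_singleton_iff] at huv
    obtain ⟨hne, h | h⟩ := huv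
    · exact ⟨h.1, h.2.1, h.2.2⟩
    · exact ⟨h.1.symm, h.2.2, h.2.1⟩
  refine ⟨?_, ?_, ?_⟩
  · -- cover A
    refine key_bound G v_p w y hdc hw A ?_ _ ?_ ?_
    · intro u v huv
      obtain ⟨hadj, hu, hv⟩ := hGdel u v huv
      rcases hcover u hu with hA | hB
      · exact Or.inl hA
      · rcases hcover v hv with hA | hB'
        · exact Or.inr hA
        · exact (hbipB hadj hB hB').elim
    · intro a b hadj ha hb
      exact (hbipA hadj ha hb).elim
    · intro a b hadj hor hvp
      rw [Sym2.mem_iff] at hvp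
      rcases hvp with rfl | rfl
      · rcases hor with h | h
        · exact absurd h hvpA
        · exact ⟨b, h, rfl⟩
      · rcases hor with h | h
        · exact ⟨a, h, Sym2.eq_swap⟩
        · exact absurd h hvpA
  · -- cover B
    refine key_bound G v_p w y hdc hw B ?_ _ ?_ ?_
    · intro u v huv
      obtain ⟨hadj, hu, hv⟩ := hGdel u v huv
      rcases hcover u hu with hA | hB
      · rcases hcover v hv with hA' | hB'
        · exact (hbipA hadj hA hA').elim
        · exact Or.inr hB'
      · exact Or.inl hB
    · intro a b hadj ha hb
      exact (hbipB hadj ha hb).elim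
    · intro a b hadj hor hvp
      rw [Sym2.mem_iff] at hvp
      rcases hvp with rfl | rfl
      · rcases hor with h | h
        · exact absurd h hvpB
        · exact ⟨b, h, rfl⟩
      · rcases hor with h | h
        · exact ⟨a, h, Sym2.eq_swap⟩
        · exact absurd h hvpB
  · -- layered cover
    intro j hj1 hj2
    set P : ℕ → Prop := fun i => (Odd i ∧ i < 2 * j) ∨ (Even i ∧ 2 * j ≤ i) with hP
    set C : Finset V :=
      Finset.univ.filter (fun v => v ≠ v_p ∧ ∃ i, i ≤ l ∧ v ∈ L i ∧ P i) with hCdef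
    have memC : ∀ v, v ∈ C ↔ v ≠ v_p ∧ ∃ i, i ≤ l ∧ v ∈ L i ∧ P i := by
      intro v; simp [hCdef]
    have mainNbr : ∀ u, u ∈ C → G.Adj v_p u → False := by
      intro u huC hadj'
      obtain ⟨hune, i, hil, huL, hPi⟩ := (memC u).mp huC
      rcases hcover u hune with hA | hB
      · have hu0 : u ∈ L 0 := (hL0 u).mpr ⟨hA, hadj'⟩
        obtain ⟨i0, _, hun⟩ := hpart u hune
        have h1 : i = i0 := hun i ⟨hil, huL⟩
        have h2 : 0 = i0 := hun 0 ⟨Nat.zero_le l, hu0⟩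
        rcases hPi with ⟨ho, _⟩ | ⟨_, hge⟩
        · obtain ⟨k, hk⟩ := ho; omega
        · omega
      · have hge : 2 * ρ - 3 ≤ i := hNB u hB hadj' i huL
        rcases hPi with ⟨_, hlt⟩ | ⟨he, _⟩
        · omega
        · exact Finset.disjoint_left.mp hdisj (hLA i he huL) hB
    refine key_bound G v_p w y hdc hw C ?_ _ ?_ ?_
    · intro u v huv
      obtain ⟨hadj, hu, hv⟩ := hGdel u v huv
      obtain ⟨i, hil, hcase⟩ := hlayered hadj hu hv
      have key2 : ∀ x z : V, x ∈ L i → z ∈ L (i + 1) → x ≠ v_p → z ≠ v_p →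
          x ∈ C ∨ z ∈ C := by
        intro x z hx hz hxp hzp
        by_cases hpi : P i
        · exact Or.inl ((memC x).mpr ⟨hxp, i, by omega, hx, hpi⟩)
        · refine Or.inr ((memC z).mpr ⟨hzp, i + 1, hil, hz, ?_⟩)
          rcases Nat.even_or_odd i with hev | hod
          · have hlt : ¬ (2 * j ≤ i) := fun h => hpi (Or.inr ⟨hev, h⟩)
            obtain ⟨k, hk⟩ := hev
            exact Or.inl ⟨⟨k, by omega⟩, by omega⟩
          · have h2 : ¬ i < 2 * j := fun h => hpi (Or.inl ⟨hod, h⟩)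
            obtain ⟨k, hk⟩ := hod
            exact Or.inr ⟨⟨k + 1, by omega⟩, by omega⟩
      rcases hcase with ⟨hu', hv'⟩ | ⟨hv', hu'⟩
      · exact key2 u v hu' hv' hu hv
      · exact (key2 v u hv' hu' hv hu).symm
    · intro a b hadj hac hbc
      obtain ⟨hanp, ia, hial, haL, hPa⟩ := (memC a).mp hac
      obtain ⟨hbnp, ib, hibl, hbL, hPb⟩ := (memC b).mp hbc
      constructor
      · rw [Sym2.mem_iff]
        rintro (rfl | rfl)
        · exact hanp rfl
        · exact hbnp rfl
      · obtain ⟨i, hil, hcase⟩ := hlayered hadj hanp hbnp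
        obtain ⟨ia0, _, huna⟩ := hpart a hanp
        obtain ⟨ib0, _, hunb⟩ := hpart b hbnp
        rcases hcase with ⟨ha', hb'⟩ | ⟨hb', ha'⟩
        · have h1 : ia = i := by
            have := huna ia ⟨hial, haL⟩
            have := huna i ⟨by omega, ha'⟩
            omega
          have h2 : ib = i + 1 := by
            have := hunb ib ⟨hibl, hbL⟩
            have := hunb (i + 1) ⟨hil, hb'⟩
            omega
          subst h1; subst h2
          have hieq : 2 * j = ia + 1 := by
            rcases hPa with ⟨⟨k, hk⟩, hlt⟩ | ⟨⟨k, hk⟩, hge⟩ <;>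
              rcases hPb with ⟨⟨m, hm⟩, hlt'⟩ | ⟨⟨m, hm⟩, hge'⟩ <;> omega
          refine ⟨a, ?_, b, ?_, rfl⟩
          · have : 2 * j - 1 = ia := by omega
            rw [this]; exact haL
          · rw [← hieq] at hbL; exact hbL
        · have h1 : ib = i := by
            have := hunb ib ⟨hibl, hbL⟩
            have := hunb i ⟨by omega, hb'⟩
            omega
          have h2 : ia = i + 1 := by
            have := huna ia ⟨hial, haL⟩
            have := huna (i + 1) ⟨hil, ha'⟩
            omega
          subst h1; subst h2
          have hieq : 2 * j = ib + 1 := by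
            rcases hPa with ⟨⟨k, hk⟩, hlt⟩ | ⟨⟨k, hk⟩, hge⟩ <;>
              rcases hPb with ⟨⟨m, hm⟩, hlt'⟩ | ⟨⟨m, hm⟩, hge'⟩ <;> omega
          refine ⟨b, ?_, a, ?_, Sym2.eq_swap⟩
          · have : 2 * j - 1 = ib := by omega
            rw [this]; exact hbL
          · rw [← hieq] at haL; exact haL
    · intro a b hadj hor hvp
      rw [Sym2.mem_iff] at hvp
      exfalso
      rcases hvp with rfl | rfl
      · rcases hor with h | h
        · exact ((memC v_p).mp h).1 rfl
        · exact mainNbr b h hadj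
      · rcases hor with h | h
        · exact mainNbr a h hadj.symm
        · exact ((memC v_p).mp h).1 rfl
end

section
/- Let G = (V,E) be a finite non-bipartite simple graph of odd girth 2ρ−1 (ρ ≥ 2 an integer), and let v_p ∈ V be such that G∖v_p is bipartite. Then for every w ∈ Q^W, w(v_p) + OPT(G∖v_p, w) ≤ (1 + 1/ρ) · OPT(G, w). -/
open Finset

private lemma oddWalkCycle {V : Type*} [DecidableEq V] {G : SimpleGraph V} :
    ∀ (n : ℕ), ∀ {u : V} (p : G.Walk u u), p.length = n → Odd n →
      ∃ (x : V) (c : G.Walk x x), c.IsCycle ∧ Odd c.length ∧ c.length ≤ n := by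
  intro n
  induction n using Nat.strong_induction_on with
  | _ n ih =>
    intro u p hlen hodd
    have hnn : ¬ p.Nil := by
      rw [SimpleGraph.Walk.nil_iff_length_eq, hlen]
      rintro rfl
      exact (Nat.not_odd_zero) hodd
    obtain ⟨v, hadj, q, rfl⟩ := SimpleGraph.Walk.not_nil_iff.mp hnn
    rw [SimpleGraph.Walk.length_cons] at hlen
    by_cases hnd : q.support.Nodup
    · have hq : q.IsPath := (SimpleGraph.Walk.isPath_def q).mpr hnd
      by_cases hin : s(u, v) ∈ q.edges
      · -- contradiction: n = 2
        exfalso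
        have hin' : s(u, v) ∈ q.reverse.edges := by
          rw [SimpleGraph.Walk.edges_reverse, List.mem_reverse]; exact hin
        have hnnr : ¬ q.reverse.Nil := by
          refine SimpleGraph.Walk.not_nil_of_ne ?_
          exact fun h => hadj.ne' h.symm
        obtain ⟨z, hz, d, hd⟩ := SimpleGraph.Walk.not_nil_iff.mp hnnr
        have hqr : q.reverse.IsPath := hq.reverse
        rw [hd] at hqr hin'
        have hnd' : (u :: d.support).Nodup := by
          have := (SimpleGraph.Walk.isPath_def _).mp hqr
          rwa [SimpleGraph.Walk.support_cons] at this
        rw [SimpleGraph.Walk.edges_cons, List.mem_cons] at hin'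
        rcases hin' with h1 | h2
        · -- s(u,v) = s(u,z): z = v, d : Walk v v path hence nil, so n = 2
          have hzv : z = v := by
            rw [Sym2.eq_iff] at h1
            rcases h1 with ⟨-, h⟩ | ⟨h1, h2⟩
            · exact h.symm
            · exact absurd h2.symm hadj.ne
          have hdnil : d.Nil := by
            by_contra hdn
            obtain ⟨z2, hz2, d2, hd2⟩ := SimpleGraph.Walk.not_nil_iff.mp hdn
            have hvmem : v ∈ d2.support := SimpleGraph.Walk.end_mem_support d2
            have hnd2 := hnd'.of_cons
            rw [hd2, SimpleGraph.Walk.support_cons] at hnd2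
            exact (List.nodup_cons.mp hnd2).1
              (show z ∈ d2.support by rw [hzv]; exact hvmem)
          have : q.reverse.length = 1 := by
            rw [hd, SimpleGraph.Walk.length_cons,
              SimpleGraph.Walk.nil_iff_length_eq.mp hdnil]
          rw [SimpleGraph.Walk.length_reverse] at this
          obtain ⟨b, hb⟩ := hodd
          omega
        · have : u ∈ d.support := SimpleGraph.Walk.fst_mem_support_of_mem_edges d h2
          exact (List.nodup_cons.mp hnd').1 this
      · refine ⟨u, SimpleGraph.Walk.cons hadj q, ?_, ?_, ?_⟩
        · exact (SimpleGraph.Walk.cons_isCycle_iff q hadj).mpr ⟨hq, hin⟩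
        · rw [SimpleGraph.Walk.length_cons, hlen]; exact hodd
        · rw [SimpleGraph.Walk.length_cons, hlen]
    · -- split at a duplicated vertex
      obtain ⟨x, hx2⟩ : ∃ x, 2 ≤ q.support.count x := by
        by_contra hc
        push_neg at hc
        exact hnd (List.nodup_iff_count_le_one.mpr fun a => by
          have := hc a; omega)
      have hx : x ∈ q.support := by
        rw [← List.count_pos_iff]; omega
      set q₁ := q.takeUntil x hx with hq₁
      set q₂ := q.dropUntil x hx with hq₂
      have hspec : q₁.append q₂ = q := SimpleGraph.Walk.take_spec q hx
      have hlsum : q₁.length + q₂.length = q.length := by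
        rw [← SimpleGraph.Walk.length_append, hspec]
      have hsup : q.support = q₁.support ++ q₂.support.tail := by
        rw [← hspec, SimpleGraph.Walk.support_append]
      have hcnt1 : q₁.support.count x = 1 :=
        SimpleGraph.Walk.count_support_takeUntil_eq_one q hx
      have hxtail : x ∈ q₂.support.tail := by
        have : q.support.count x = q₁.support.count x + q₂.support.tail.count x := by
          rw [hsup, List.count_append]
        rw [← List.count_pos_iff]
        omega
      have hq₂nn : ¬ q₂.Nil := by
        intro hnil
        rw [SimpleGraph.Walk.nil_iff_support_eq] at hnil
        rw [hnil] at hxtail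
        simp at hxtail
      obtain ⟨z, hz, r, hr⟩ := SimpleGraph.Walk.not_nil_iff.mp hq₂nn
      have hxr : x ∈ r.support := by
        rw [hr, SimpleGraph.Walk.support_cons] at hxtail
        exact hxtail
      set r₁ := r.takeUntil x hxr with hr₁
      set r₂ := r.dropUntil x hxr with hr₂
      have hrsum : r₁.length + r₂.length = r.length := by
        rw [← SimpleGraph.Walk.length_append, SimpleGraph.Walk.take_spec]
      -- two closed walks at x
      set C₁ : G.Walk x x := SimpleGraph.Walk.cons hz r₁ with hC₁
      set C₂ : G.Walk x x := r₂.append ((SimpleGraph.Walk.cons hadj q₁).copy rfl rfl) with hC₂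
      have hC₁len : C₁.length = r₁.length + 1 := by
        rw [hC₁, SimpleGraph.Walk.length_cons]
      have hC₂len : C₂.length = r₂.length + q₁.length + 1 := by
        rw [hC₂, SimpleGraph.Walk.length_append, SimpleGraph.Walk.length_copy,
          SimpleGraph.Walk.length_cons]
        omega
      have hq₂len : q₂.length = r.length + 1 := by
        rw [hr, SimpleGraph.Walk.length_cons]
      have htot : C₁.length + C₂.length = n := by omega
      have h1 : 1 ≤ C₁.length := by omega
      have h2 : 1 ≤ C₂.length := by omega
      rcases Nat.even_or_odd C₁.length with he | ho
      · have : Odd C₂.length := by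
          rcases he with ⟨a, ha⟩; rcases hodd with ⟨b, hb⟩
          refine ⟨b - a, by omega⟩
        obtain ⟨x', c, hc⟩ := ih C₂.length (by omega) C₂ rfl this
        exact ⟨x', c, hc.1, hc.2.1, by omega⟩
      · obtain ⟨x', c, hc⟩ := ih C₁.length (by omega) C₁ rfl ho
        exact ⟨x', c, hc.1, hc.2.1, by omega⟩


section

variable {V : Type*} [Fintype V] [DecidableEq V] (G : SimpleGraph V) (w : V → ℝ)
  (y : Sym2 V → ℝ)

open scoped Classical in
private lemma wsum_eq (h0 : ∀ e, 0 ≤ y e)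
    (hdeg : ∀ v, ysum y (fun e => e ∈ G.edgeSet ∧ v ∈ e) = w v) (X : Finset V) :
    ∑ v ∈ X, w v
      = ∑ e : Sym2 V, (if e ∈ G.edgeSet then y e * ((X.filter (· ∈ e)).card : ℝ) else 0) := by
  classical
  have : ∑ v ∈ X, w v = ∑ v ∈ X, ∑ e : Sym2 V,
      (if e ∈ G.edgeSet ∧ v ∈ e then y e else 0) := by
    refine Finset.sum_congr rfl fun v _ => ?_
    rw [← hdeg v, ysum]
    refine Finset.sum_congr rfl fun e _ => ?_
    congr 1
  rw [this, Finset.sum_comm]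
  refine Finset.sum_congr rfl fun e _ => ?_
  by_cases he : e ∈ G.edgeSet
  · simp only [he, true_and, if_true]
    rw [← Finset.sum_filter, Finset.sum_const, nsmul_eq_mul, mul_comm]
  · simp [he]

private lemma edge_filter_card_two (X : Finset V) (hX : X = Finset.univ) {e : Sym2 V}
    (he : e ∈ G.edgeSet) : ((X.filter (· ∈ e)).card : ℝ) = 2 := by
  subst hX
  induction e with
  | _ a b =>
    have hadj : G.Adj a b := he
    have hne : a ≠ b := hadj.ne
    have : Finset.univ.filter (· ∈ s(a, b)) = {a, b} := by
      ext v
      simp [Sym2.mem_iff]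
    rw [this, Finset.card_insert_of_notMem (by simp [hne]), Finset.card_singleton]
    norm_num

open scoped Classical in
private lemma y_edge_sum_one (h0 : ∀ e, 0 ≤ y e)
    (hdeg : ∀ v, ysum y (fun e => e ∈ G.edgeSet ∧ v ∈ e) = w v)
    (htot : ∑ v, w v = 2) :
    ∑ e : Sym2 V, (if e ∈ G.edgeSet then y e else 0) = 1 := by
  classical
  have h := wsum_eq G w y h0 hdeg Finset.univ
  rw [htot] at h
  have h2 : ∑ e : Sym2 V, (if e ∈ G.edgeSet then y e * ((Finset.univ.filter (· ∈ e)).card : ℝ) else 0)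
      = 2 * ∑ e : Sym2 V, (if e ∈ G.edgeSet then y e else 0) := by
    rw [Finset.mul_sum]
    refine Finset.sum_congr rfl fun e _ => ?_
    by_cases he : e ∈ G.edgeSet
    · simp only [he, if_true]
      rw [edge_filter_card_two G Finset.univ rfl he]
      ring
    · simp [he]
  rw [h2] at h
  linarith

open scoped Classical in
private lemma cover_ge_one (h0 : ∀ e, 0 ≤ y e)
    (hdeg : ∀ v, ysum y (fun e => e ∈ G.edgeSet ∧ v ∈ e) = w v)
    (htot : ∑ v, w v = 2) (C : Finset V) (hC : IsVC G C) :
    1 ≤ ∑ v ∈ C, w v := by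
  classical
  rw [wsum_eq G w y h0 hdeg C, ← y_edge_sum_one G w y h0 hdeg htot]
  refine Finset.sum_le_sum fun e _ => ?_
  by_cases he : e ∈ G.edgeSet
  · simp only [he, if_true]
    have hcard : 1 ≤ ((C.filter (· ∈ e)).card : ℝ) := by
      have : (C.filter (· ∈ e)).Nonempty := by
        induction e with
        | _ a b =>
          rcases hC (he : G.Adj a b) with h | h
          · exact ⟨a, Finset.mem_filter.mpr ⟨h, by simp⟩⟩
          · exact ⟨b, Finset.mem_filter.mpr ⟨h, by simp⟩⟩
      have := Finset.card_pos.mpr this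
      exact_mod_cast this
    calc y e = y e * 1 := by ring
    _ ≤ y e * ((C.filter (· ∈ e)).card : ℝ) := by
        exact mul_le_mul_of_nonneg_left hcard (h0 e)
  · simp [he]

open scoped Classical in
private lemma indep_le_one (h0 : ∀ e, 0 ≤ y e)
    (hdeg : ∀ v, ysum y (fun e => e ∈ G.edgeSet ∧ v ∈ e) = w v)
    (htot : ∑ v, w v = 2) (I : Finset V) (hI : IsIndep G I) :
    ∑ v ∈ I, w v ≤ 1 := by
  classical
  rw [wsum_eq G w y h0 hdeg I, ← y_edge_sum_one G w y h0 hdeg htot]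
  refine Finset.sum_le_sum fun e _ => ?_
  by_cases he : e ∈ G.edgeSet
  · simp only [he, if_true]
    have hcard : ((I.filter (· ∈ e)).card : ℝ) ≤ 1 := by
      have hc1 : (I.filter (· ∈ e)).card ≤ 1 := by
        rw [Finset.card_le_one]
        intro a ha b hb
        induction e with
        | _ x z =>
          have hxz : G.Adj x z := he
          obtain ⟨haI, hae⟩ := Finset.mem_filter.mp ha
          obtain ⟨hbI, hbe⟩ := Finset.mem_filter.mp hb
          rw [Sym2.mem_iff] at hae hbe
          by_contra hab
          rcases hae with rfl | rfl <;> rcases hbe with rfl | rfl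
          · exact hab rfl
          · exact hI haI hbI hxz
          · exact hI hbI haI hxz
          · exact hab rfl
      exact_mod_cast hc1
    calc y e * ((I.filter (· ∈ e)).card : ℝ) ≤ y e * 1 :=
        mul_le_mul_of_nonneg_left hcard (h0 e)
    _ = y e := by ring
  · simp [he]

end


private lemma exists_hom {V : Type*} [DecidableEq V] (G : SimpleGraph V) (k : ℕ) (hk : 1 ≤ k)
    (v_p : V) (hbip : (Gdel G {v_p}).Colorable 2)
    (hgirth : ∀ (x : V) (c : G.Walk x x), Odd c.length → 2 * k + 1 ≤ c.length) :
    ∃ φ : V → ZMod (2 * k + 1), φ v_p = 0 ∧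
      ∀ u v, G.Adj u v → (φ u - φ v = 1 ∨ φ u - φ v = -1) := by
  classical
  set n := 2 * k + 1 with hn
  obtain ⟨c⟩ := hbip
  set s : V → ℕ := fun v => (c v : ℕ) with hs
  set d : V → ℕ := fun v => G.dist v_p v with hd
  -- coloring fact
  have hcol : ∀ u v, G.Adj u v → u ≠ v_p → v ≠ v_p → s u + s v = 1 := by
    intro u v hadj hu hv
    have hGdel : (Gdel G {v_p}).Adj u v := by
      refine ⟨hadj.ne, Or.inl ⟨hadj, by simp [hu], by simp [hv]⟩⟩
    have hne := c.valid hGdel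
    have h1 : (c u : ℕ) < 2 := (c u).isLt
    have h2 : (c v : ℕ) < 2 := (c v).isLt
    have h3 : (c u : ℕ) ≠ (c v : ℕ) := fun h => hne (Fin.ext h)
    simp only [hs]
    omega
  -- no same-level edges in shallow region
  have hnosame : ∀ u v, G.Adj u v → G.Reachable v_p u → u ≠ v_p → v ≠ v_p →
      d u = d v → k ≤ d u := by
    intro u v hadj hru hu hv heq
    have hrv : G.Reachable v_p v := hru.trans hadj.reachable
    obtain ⟨pu, hpu⟩ := hru.exists_walk_length_eq_dist
    obtain ⟨pv, hpv⟩ := hrv.exists_walk_length_eq_dist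
    have hwalk : (pu.append (SimpleGraph.Walk.cons hadj pv.reverse)).length
        = 2 * d u + 1 := by
      rw [SimpleGraph.Walk.length_append, SimpleGraph.Walk.length_cons,
        SimpleGraph.Walk.length_reverse, hpu, hpv]
      have e1 : d u = G.dist v_p u := rfl
      have e2 : d v = G.dist v_p v := rfl
      omega
    have := hgirth v_p _ (by rw [hwalk]; exact ⟨d u, by ring⟩)
    rw [hwalk] at this
    omega
  have hdist_le : ∀ u v, G.Adj u v → G.Reachable v_p u → d v ≤ d u + 1 := by
    intro u v hadj hru
    obtain ⟨pu, hpu⟩ := hru.exists_walk_length_eq_dist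
    have := SimpleGraph.dist_le (pu.concat hadj)
    rw [SimpleGraph.Walk.length_concat, hpu] at this
    exact this
  have hdpos : ∀ v, v ≠ v_p → G.Reachable v_p v → 1 ≤ d v := by
    intro v hv hr
    have h1 := SimpleGraph.dist_ne_zero_iff_ne_and_reachable.mpr ⟨fun h => hv h.symm, hr⟩
    have e1 : d v = G.dist v_p v := rfl
    omega
  -- the map
  set φ : V → ZMod n := fun v =>
    if v = v_p then 0
    else if G.Reachable v_p v ∧ d v ≤ k - 1 then
      (if (s v + d v) % 2 = 0 then ((d v : ℕ) : ZMod n) else -((d v : ℕ) : ZMod n))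
    else
      (if (s v + k) % 2 = 0 then ((k : ℕ) : ZMod n) else -((k : ℕ) : ZMod n)) with hφ
  have hφp : φ v_p = 0 := by simp [hφ]
  have h2k : ((2 * k : ℕ) : ZMod n) = -1 := by
    have h0 : ((n : ℕ) : ZMod n) = 0 := ZMod.natCast_self n
    rw [hn] at h0
    push_cast at h0 ⊢
    linear_combination h0
  -- step 1 : edges at v_p
  have step1 : ∀ v, G.Adj v_p v → (φ v_p - φ v = 1 ∨ φ v_p - φ v = -1) := by
    intro v hadj
    have hv : v ≠ v_p := fun h => hadj.ne h.symm
    have hdv : d v = 1 := by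
      simp only [hd]; exact SimpleGraph.dist_eq_one_iff_adj.mpr hadj
    have : φ v = ((1 : ℕ) : ZMod n) ∨ φ v = -((1 : ℕ) : ZMod n) := by
      simp only [hφ, if_neg hv]
      by_cases hsh : G.Reachable v_p v ∧ d v ≤ k - 1
      · rw [if_pos hsh, hdv]
        by_cases hpar : (s v + 1) % 2 = 0
        · left; rw [if_pos hpar]
        · right; rw [if_neg hpar]
      · rw [if_neg hsh]
        have hk1 : k = 1 := by
          have hreach : G.Reachable v_p v := hadj.reachable
          by_contra hkk
          exact hsh ⟨hreach, by omega⟩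
        rw [hk1]
        by_cases hpar : (s v + 1) % 2 = 0
        · left; rw [if_pos hpar]
        · right; rw [if_neg hpar]
    rcases this with h | h <;> rw [hφp, h] <;> [right; left] <;> push_cast <;> ring
  -- step 2 : both deep
  have step2 : ∀ u v, G.Adj u v → u ≠ v_p → v ≠ v_p →
      ¬(G.Reachable v_p u ∧ d u ≤ k - 1) → ¬(G.Reachable v_p v ∧ d v ≤ k - 1) →
      (φ u - φ v = 1 ∨ φ u - φ v = -1) := by
    intro u v hadj hu hv hdu hdv
    have hcs := hcol u v hadj hu hv
    simp only [hφ, if_neg hu, if_neg hv, if_neg hdu, if_neg hdv]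
    by_cases hp : (s u + k) % 2 = 0
    · have hp' : ¬ (s v + k) % 2 = 0 := by omega
      rw [if_pos hp, if_neg hp']
      right
      have : ((k : ℕ) : ZMod n) - -((k : ℕ) : ZMod n) = ((2 * k : ℕ) : ZMod n) + 1 - 1 := by
        push_cast; ring
      rw [this, h2k]; ring
    · have hp' : (s v + k) % 2 = 0 := by omega
      rw [if_neg hp, if_pos hp']
      left
      have : -((k : ℕ) : ZMod n) - ((k : ℕ) : ZMod n) = -(((2 * k : ℕ) : ZMod n) + 1) + 1 := by
        push_cast; ring
      rw [this, h2k]; ring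
  -- step 3 : both shallow, d v = d u + 1
  have step3 : ∀ u v, G.Adj u v → u ≠ v_p → v ≠ v_p →
      (G.Reachable v_p u ∧ d u ≤ k - 1) → (G.Reachable v_p v ∧ d v ≤ k - 1) →
      d v = d u + 1 → (φ u - φ v = 1 ∨ φ u - φ v = -1) := by
    intro u v hadj hu hv hshu hshv hdv
    have hcs := hcol u v hadj hu hv
    simp only [hφ, if_neg hu, if_neg hv, if_pos hshu, if_pos hshv]
    by_cases hp : (s u + d u) % 2 = 0
    · have hp' : (s v + d v) % 2 = 0 := by omega
      rw [if_pos hp, if_pos hp', hdv]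
      right; push_cast; ring
    · have hp' : ¬ (s v + d v) % 2 = 0 := by omega
      rw [if_neg hp, if_neg hp', hdv]
      left; push_cast; ring
  -- step 4 : u shallow, v deep
  have step4 : ∀ u v, G.Adj u v → u ≠ v_p → v ≠ v_p →
      (G.Reachable v_p u ∧ d u ≤ k - 1) → ¬(G.Reachable v_p v ∧ d v ≤ k - 1) →
      (φ u - φ v = 1 ∨ φ u - φ v = -1) := by
    intro u v hadj hu hv hshu hdv
    have hrv : G.Reachable v_p v := hshu.1.trans hadj.reachable
    have hvk : ¬ d v ≤ k - 1 := fun h => hdv ⟨hrv, h⟩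
    have hvle : d v ≤ d u + 1 := hdist_le u v hadj hshu.1
    have hule : d u ≤ d v + 1 := hdist_le v u hadj.symm hrv
    have hdu : d u = k - 1 := by omega
    have hdveq : d v = k := by omega
    have hcs := hcol u v hadj hu hv
    simp only [hφ, if_neg hu, if_neg hv, if_pos hshu, if_neg hdv]
    have hcast : ((d u : ℕ) : ZMod n) = ((k : ℕ) : ZMod n) - 1 := by
      rw [hdu]
      have : ((k - 1 : ℕ) : ZMod n) = ((k : ℕ) : ZMod n) - ((1 : ℕ) : ZMod n) :=
        Nat.cast_sub hk
      rw [this]; push_cast; ring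
    by_cases hp : (s u + d u) % 2 = 0
    · have hp' : (s v + k) % 2 = 0 := by omega
      rw [if_pos hp, if_pos hp', hcast]
      right; ring
    · have hp' : ¬ (s v + k) % 2 = 0 := by omega
      rw [if_neg hp, if_neg hp', hcast]
      left; ring
  -- assemble
  refine ⟨φ, hφp, ?_⟩
  have sym : ∀ u v, (φ u - φ v = 1 ∨ φ u - φ v = -1) →
      (φ v - φ u = 1 ∨ φ v - φ u = -1) := by
    rintro u v (h | h)
    · right; linear_combination -h
    · left; linear_combination -h
  intro u v hadj
  by_cases hu : u = v_p
  · subst hu; exact step1 v hadj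
  by_cases hv : v = v_p
  · subst hv; exact sym v u (step1 u hadj.symm)
  by_cases hru : G.Reachable v_p u
  · have hrv : G.Reachable v_p v := hru.trans hadj.reachable
    by_cases hshu : d u ≤ k - 1
    · by_cases hshv : d v ≤ k - 1
      · -- both shallow
        have hne : d u ≠ d v := by
          intro h
          have := hnosame u v hadj hru hu hv h
          have := hdpos u hu hru
          omega
        have h1 : d v ≤ d u + 1 := hdist_le u v hadj hru
        have h2 : d u ≤ d v + 1 := hdist_le v u hadj.symm hrv
        rcases (by omega : d v = d u + 1 ∨ d u = d v + 1) with h | h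
        · exact step3 u v hadj hu hv ⟨hru, hshu⟩ ⟨hrv, hshv⟩ h
        · exact sym v u (step3 v u hadj.symm hv hu ⟨hrv, hshv⟩ ⟨hru, hshu⟩ h)
      · exact step4 u v hadj hu hv ⟨hru, hshu⟩ (fun h => hshv h.2)
    · by_cases hshv : d v ≤ k - 1
      · exact sym v u (step4 v u hadj.symm hv hu ⟨hrv, hshv⟩ (fun h => hshu h.2))
      · exact step2 u v hadj hu hv (fun h => hshu h.2) (fun h => hshv h.2)
  · have hrv : ¬ G.Reachable v_p v := fun h => hru (h.trans hadj.symm.reachable)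
    exact step2 u v hadj hu hv (fun h => hru h.1) (fun h => hrv h.1)


private lemma exists_indepJ {V : Type*} [Fintype V] [DecidableEq V] (G : SimpleGraph V)
    (k : ℕ) (hk : 1 ≤ k) (v_p : V) (w : V → ℝ)
    (φ : V → ZMod (2 * k + 1)) (hφp : φ v_p = 0)
    (hhom : ∀ u v, G.Adj u v → (φ u - φ v = 1 ∨ φ u - φ v = -1))
    (hind : ∀ I : Finset V, IsIndep G I → ∑ v ∈ I, w v ≤ 1)
    (htot : ∑ v, w v = 2) :
    ∃ J : Finset V, IsIndep G J ∧ v_p ∉ J ∧ (k : ℝ) / ((k : ℝ) + 1) ≤ ∑ v ∈ J, w v := by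
  classical
  haveI : NeZero (2 * k + 1) := ⟨by omega⟩
  have hzero : ∀ x : ℤ, x ≠ 0 → x.natAbs < 2 * k + 1 → ((x : ZMod (2 * k + 1)) ≠ 0) := by
    intro x hx hlt h
    rw [ZMod.intCast_zmod_eq_zero_iff_dvd] at h
    have h2 : 2 * k + 1 ∣ x.natAbs := Int.natCast_dvd_natCast.mp (Int.dvd_natAbs.mpr h)
    have := Nat.le_of_dvd (by omega) h2
    omega
  set cst : ℕ → ZMod (2 * k + 1) := fun m => ((2 * m + 1 : ℕ) : ZMod (2 * k + 1)) with hcst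
  set S : ZMod (2 * k + 1) → Finset (ZMod (2 * k + 1)) := fun j => (Finset.range k).image (fun m => j + cst m)
    with hS
  have hcst_inj : ∀ m₁ ∈ Finset.range k, ∀ m₂ ∈ Finset.range k,
      cst m₁ = cst m₂ → m₁ = m₂ := by
    intro m₁ h₁ m₂ h₂ h
    rw [Finset.mem_range] at h₁ h₂
    by_contra hne
    have hx : ((2 * (m₁ : ℤ) + 1 - (2 * m₂ + 1) : ℤ) : ZMod (2 * k + 1)) = 0 := by
      push_cast
      simp only [hcst] at h
      push_cast at h
      linear_combination h
    refine hzero _ ?_ ?_ hx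
    · omega
    · omega
  -- each S j pulls back to an independent set
  have hSind : ∀ j : ZMod (2 * k + 1), IsIndep G (Finset.univ.filter (fun v => φ v ∈ S j)) := by
    intro j u hu v hv hadj
    obtain ⟨-, hu⟩ := Finset.mem_filter.mp hu
    obtain ⟨-, hv⟩ := Finset.mem_filter.mp hv
    simp only [hS, Finset.mem_image, Finset.mem_range] at hu hv
    obtain ⟨m₁, hm₁, he₁⟩ := hu
    obtain ⟨m₂, hm₂, he₂⟩ := hv
    have hdiff : φ u - φ v = cst m₁ - cst m₂ := by
      rw [← he₁, ← he₂]; ring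
    have habs : ∀ (t : ℤ), t = 1 ∨ t = -1 →
        ((2 * (m₁ : ℤ) + 1 - (2 * m₂ + 1) - t : ℤ) : ZMod (2 * k + 1)) = 0 → False := by
      intro t ht hx
      refine hzero _ ?_ ?_ hx <;> omega
    rcases hhom u v hadj with h | h
    · rw [hdiff] at h
      refine habs 1 (Or.inl rfl) ?_
      push_cast
      simp only [hcst] at h
      push_cast at h
      linear_combination h
    · rw [hdiff] at h
      refine habs (-1) (Or.inr rfl) ?_
      push_cast
      simp only [hcst] at h
      push_cast at h
      linear_combination h
  -- counting : each residue is in exactly k of the sets S j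
  have hcount : ∀ p : ZMod (2 * k + 1), (Finset.univ.filter (fun j => p ∈ S j)).card = k := by
    intro p
    have : Finset.univ.filter (fun j => p ∈ S j)
        = (Finset.range k).image (fun m => p - cst m) := by
      ext j
      simp only [Finset.mem_filter, Finset.mem_univ, true_and, hS, Finset.mem_image,
        Finset.mem_range]
      constructor
      · rintro ⟨m, hm, he⟩
        exact ⟨m, hm, by rw [← he]; ring⟩
      · rintro ⟨m, hm, he⟩
        exact ⟨m, hm, by rw [← he]; ring⟩
    rw [this, Finset.card_image_of_injOn, Finset.card_range]
    intro m₁ h₁ m₂ h₂ h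
    refine hcst_inj m₁ h₁ m₂ h₂ ?_
    have : p - cst m₁ = p - cst m₂ := h
    linear_combination -this
  set W : ZMod (2 * k + 1) → ℝ := fun j => ∑ v ∈ Finset.univ.filter (fun v => φ v ∈ S j), w v with hW
  have hWtot : ∑ j : ZMod (2 * k + 1), W j = 2 * k := by
    simp only [hW, Finset.sum_filter]
    rw [Finset.sum_comm]
    have : ∀ v : V, ∑ j : ZMod (2 * k + 1), (if φ v ∈ S j then w v else 0) = (k : ℝ) * w v := by
      intro v
      rw [← Finset.sum_filter, Finset.sum_const, hcount (φ v), nsmul_eq_mul]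
    rw [Finset.sum_congr rfl fun v _ => this v, ← Finset.mul_sum, htot]
    ring
  set B : Finset (ZMod (2 * k + 1)) := (Finset.range k).image (fun m => - cst m) with hB
  have hBcard : B.card = k := by
    rw [hB, Finset.card_image_of_injOn, Finset.card_range]
    intro m₁ h₁ m₂ h₂ h
    refine hcst_inj m₁ h₁ m₂ h₂ ?_
    have : - cst m₁ = - cst m₂ := h
    linear_combination -this
  have hBsum : ∑ j ∈ B, W j ≤ (k : ℝ) := by
    calc ∑ j ∈ B, W j ≤ ∑ _j ∈ B, (1 : ℝ) :=
      Finset.sum_le_sum fun j _ => hind _ (hSind j)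
    _ = (k : ℝ) := by rw [Finset.sum_const, hBcard, nsmul_eq_mul]; ring
  have hcompl_card : Bᶜ.card = k + 1 := by
    rw [Finset.card_compl, hBcard]
    have : Fintype.card (ZMod (2 * k + 1)) = 2 * k + 1 := ZMod.card _
    omega
  have hcompl_sum : (k : ℝ) ≤ ∑ j ∈ Bᶜ, W j := by
    have : ∑ j ∈ B, W j + ∑ j ∈ Bᶜ, W j = 2 * k := by
      rw [Finset.sum_add_sum_compl, hWtot]
    linarith
  have hex : ∃ j ∈ Bᶜ, (k : ℝ) / ((k : ℝ) + 1) ≤ W j := by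
    by_contra hcon
    push_neg at hcon
    have hne : Bᶜ.Nonempty := Finset.card_pos.mp (by omega)
    have : ∑ j ∈ Bᶜ, W j < ∑ _j ∈ Bᶜ, ((k : ℝ) / ((k : ℝ) + 1)) :=
      Finset.sum_lt_sum_of_nonempty hne fun j hj => hcon j hj
    rw [Finset.sum_const, hcompl_card, nsmul_eq_mul] at this
    have hcast : ((k + 1 : ℕ) : ℝ) = (k : ℝ) + 1 := by push_cast; ring
    rw [hcast] at this
    have hkpos : (0 : ℝ) < (k : ℝ) + 1 := by positivity
    have heq2 : ((k : ℝ) + 1) * ((k : ℝ) / ((k : ℝ) + 1)) = (k : ℝ) := by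
      field_simp
    linarith
  obtain ⟨j, hjB, hjW⟩ := hex
  refine ⟨Finset.univ.filter (fun v => φ v ∈ S j), hSind j, ?_, hjW⟩
  rw [Finset.mem_filter, hφp]
  rintro ⟨-, h0⟩
  simp only [hS, Finset.mem_image, Finset.mem_range] at h0
  obtain ⟨m, hm, he⟩ := h0
  have : j = - cst m := by linear_combination he
  rw [Finset.mem_compl] at hjB
  exact hjB (by rw [hB]; exact Finset.mem_image.mpr ⟨m, Finset.mem_range.mpr hm, this.symm⟩)


/-- if removing `v_p` bipartizes `G` and `G` has odd girth `2ρ-1`, then the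
round-and-bipartize value is at most `(1 + 1/ρ) · OPT(G,w)` for every `w ∈ Q^W`. -/
theorem round_bipartize_one_vertex {V : Type*} [Fintype V] [DecidableEq V]
    (G : SimpleGraph V) (hnb : ¬ G.Colorable 2)
    (ρ : ℕ) (hρ : 2 ≤ ρ) (hog : HasOddGirth G (2 * ρ - 1))
    (v_p : V) (hbip : (Gdel G {v_p}).Colorable 2)
    (w : V → ℝ) (hw : memQW G w) :
    w v_p + OPT (Gdel G {v_p}) w ≤ (1 + 1 / (ρ : ℝ)) * OPT G w := by
  classical
  obtain ⟨hw0, htot, y, hy0, hysupp, hydeg⟩ := hw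
  set k := ρ - 1 with hkdef
  have hk : 1 ≤ k := by omega
  have hgirth : ∀ (x : V) (c : G.Walk x x), Odd c.length → 2 * k + 1 ≤ c.length := by
    intro x c hodd
    obtain ⟨x', cyc, hcyc, hodd', hle⟩ := oddWalkCycle c.length c rfl hodd
    have := hog.2.2 x' cyc hcyc hodd'
    omega
  obtain ⟨φ, hφp, hhom⟩ := exists_hom G k hk v_p hbip hgirth
  have hind : ∀ I : Finset V, IsIndep G I → ∑ v ∈ I, w v ≤ 1 :=
    fun I hI => indep_le_one G w y hy0 hydeg htot I hI
  obtain ⟨J, hJind, hJvp, hJw⟩ := exists_indepJ G k hk v_p w φ hφp hhom hind htot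
  -- OPT G w ≥ 1
  have hOPT1 : (1 : ℝ) ≤ OPT G w := by
    refine le_csInf ⟨∑ v ∈ Finset.univ, w v, Finset.univ, fun u v _ => Or.inl (Finset.mem_univ u), rfl⟩ ?_
    rintro t ⟨C, hC, rfl⟩
    exact cover_ge_one G w y hy0 hydeg htot C hC
  -- a cover of Gdel from J
  set D : Finset V := Finset.univ \ insert v_p J with hD
  have hVC : IsVC (Gdel G {v_p}) D := by
    intro a b hab
    obtain ⟨hne, hrel⟩ := hab
    by_contra hcon
    push_neg at hcon
    obtain ⟨haD, hbD⟩ := hcon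
    have haJ : a = v_p ∨ a ∈ J := by
      have := Finset.mem_sdiff.not.mp haD
      push_neg at this
      have h2 := this (Finset.mem_univ a)
      rcases Finset.mem_insert.mp h2 with h | h
      · exact Or.inl h
      · exact Or.inr h
    have hbJ : b = v_p ∨ b ∈ J := by
      have := Finset.mem_sdiff.not.mp hbD
      push_neg at this
      have h2 := this (Finset.mem_univ b)
      rcases Finset.mem_insert.mp h2 with h | h
      · exact Or.inl h
      · exact Or.inr h
    rcases hrel with ⟨hadj, ha, hb⟩ | ⟨hadj, hb, ha⟩
    · have ha' : a ∈ J := by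
        rcases haJ with h | h
        · exact absurd (by simp [h]) ha
        · exact h
      have hb' : b ∈ J := by
        rcases hbJ with h | h
        · exact absurd (by simp [h]) hb
        · exact h
      exact hJind ha' hb' hadj
    · have ha' : a ∈ J := by
        rcases haJ with h | h
        · exact absurd (by simp [h]) ha
        · exact h
      have hb' : b ∈ J := by
        rcases hbJ with h | h
        · exact absurd (by simp [h]) hb
        · exact h
      exact hJind hb' ha' hadj
  have hbdd : BddBelow {t : ℝ | ∃ C : Finset V, IsVC (Gdel G {v_p}) C ∧ t = ∑ v ∈ C, w v} := by
    refine ⟨0, ?_⟩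
    rintro t ⟨C, hC, rfl⟩
    exact Finset.sum_nonneg fun v _ => hw0 v
  have hOPTdel : OPT (Gdel G {v_p}) w ≤ ∑ v ∈ D, w v :=
    csInf_le hbdd ⟨D, hVC, rfl⟩
  have hsplit : ∑ v ∈ D, w v = 2 - (w v_p + ∑ v ∈ J, w v) := by
    have h1 : ∑ v ∈ D, w v + ∑ v ∈ insert v_p J, w v = ∑ v, w v :=
      Finset.sum_sdiff (Finset.subset_univ _)
    have h2 : ∑ v ∈ insert v_p J, w v = w v_p + ∑ v ∈ J, w v :=
      Finset.sum_insert hJvp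
    rw [h2] at h1
    rw [htot] at h1
    linarith
  -- arithmetic finish
  have hkρ : (k : ℝ) + 1 = (ρ : ℝ) := by
    have h : k + 1 = ρ := by omega
    exact_mod_cast congrArg (fun m : ℕ => (m : ℝ)) h
  have hρpos : (0 : ℝ) < (ρ : ℝ) := by
    have : (0 : ℕ) < ρ := by omega
    exact_mod_cast this
  have hstep : w v_p + OPT (Gdel G {v_p}) w ≤ 1 + 1 / (ρ : ℝ) := by
    have h1 : w v_p + OPT (Gdel G {v_p}) w ≤ 2 - ∑ v ∈ J, w v := by
      rw [hsplit] at hOPTdel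
      linarith
    have h2 : 2 - ∑ v ∈ J, w v ≤ 2 - (k : ℝ) / ((k : ℝ) + 1) := by linarith
    have h3 : 2 - (k : ℝ) / ((k : ℝ) + 1) = 1 + 1 / ((k : ℝ) + 1) := by
      have hne : (k : ℝ) + 1 ≠ 0 := by positivity
      field_simp
      ring
    have h4 : (1 : ℝ) + 1 / ((k : ℝ) + 1) = 1 + 1 / (ρ : ℝ) := by rw [hkρ]
    linarith
  have hfac : (0 : ℝ) ≤ 1 + 1 / (ρ : ℝ) := by positivity
  calc w v_p + OPT (Gdel G {v_p}) w ≤ 1 + 1 / (ρ : ℝ) := hstep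
  _ = (1 + 1 / (ρ : ℝ)) * 1 := by ring
  _ ≤ (1 + 1 / (ρ : ℝ)) * OPT G w := by
      exact mul_le_mul_of_nonneg_left hOPT1 hfac
end

section
/- Let G = (V,E) be a finite simple graph and I ⊆ V an independent set such that G∖I is bipartite. For a vertex cover U of G∖I, let E_U be the set consisting of all edges of G∖I with both endpoints in U together with all edges of G with one endpoint in U and the other in I; vertex covers U₁, U₂ of G∖I are called edge-separate (with respect to G) if E_{U₁} ∩ E_{U₂} = ∅. If there exist k pairwise edge-separate vertex covers of G∖I, then for every w ∈ Q^W, w(I) + OPT(G∖I, w) ≤ (1 + 1/k) · OPT(G, w). -/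
open Finset

/-- The edge set `E_U` associated to a vertex cover `U` of `G ∖ I`: edges of `G ∖ I` with both
endpoints in `U`, together with edges of `G` between `U` and `I`. -/
def EUset {V : Type*} (G : SimpleGraph V) (I U : Finset V) : Set (Sym2 V) :=
  {e : Sym2 V | ∃ a b : V, e = s(a, b) ∧ G.Adj a b ∧
    ((a ∈ U ∧ b ∈ U) ∨ (a ∈ U ∧ b ∈ I))}

/-- `k` pairwise edge-separate vertex covers of `G ∖ I` yield the bound
`w(I) + OPT(G∖I, w) ≤ (1 + 1/k) · OPT(G, w)` for every `w ∈ Q^W`. -/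
theorem edge_separate_covers_bound {V : Type*} [Fintype V] [DecidableEq V]
    (G : SimpleGraph V) (I : Finset V) (hI : IsIndep G I)
    (hbip : (Gdel G ↑I).Colorable 2)
    (k : ℕ) (hk : 1 ≤ k) (U : Fin k → Finset V)
    (hUI : ∀ i, Disjoint (U i) I)
    (hUcov : ∀ i, IsVC (Gdel G ↑I) (U i))
    (hsep : ∀ i j : Fin k, i ≠ j → EUset G I (U i) ∩ EUset G I (U j) = ∅)
    (w : V → ℝ) (hw : memQW G w) :
    ∑ v ∈ I, w v + OPT (Gdel G ↑I) w ≤ (1 + 1 / (k : ℝ)) * OPT G w := by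
  classical
  obtain ⟨hw0, hw2, y, hy0, hysupp, hydual⟩ := hw
  simp only [ysum] at hydual
  have hydual' : ∀ v : V, (∑ e : Sym2 V, if e ∈ G.edgeSet ∧ v ∈ e then y e else 0) = w v := by
    intro v
    rw [← hydual v]
    apply Finset.sum_congr rfl
    intro e _
    congr 1
  -- helper: split an `e ∈ E ∧ v ∈ e` ite
  have inner : ∀ (e : Sym2 V) (X : Finset V),
      (∑ v ∈ X, if e ∈ G.edgeSet ∧ v ∈ e then y e else 0)
        = (if e ∈ G.edgeSet then (∑ v ∈ X, if v ∈ e then y e else 0) else 0) := by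
    intro e X
    by_cases he : e ∈ G.edgeSet <;> simp [he]
  -- helper: sum of an ite over membership in a pair
  have pairsum : ∀ (a b : V), a ≠ b → ∀ (X : Finset V) (c : ℝ),
      (∑ v ∈ X, if v ∈ s(a, b) then c else 0)
        = (if a ∈ X then c else 0) + (if b ∈ X then c else 0) := by
    intro a b hab X c
    have hterm : ∀ v, (if v ∈ s(a, b) then c else 0)
        = (if v = a then c else 0) + (if v = b then c else 0) := by
      intro v
      by_cases h1 : v = a <;> by_cases h2 : v = b
      · exact absurd (h1.symm.trans h2) hab
      · simp only [Sym2.mem_iff, h1, h2]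
        simp [hab]
      · simp only [Sym2.mem_iff, h1, h2]
        simp [hab, Ne.symm hab]
      · simp [Sym2.mem_iff, h1, h2]
    rw [Finset.sum_congr rfl fun v _ => hterm v, Finset.sum_add_distrib,
      Finset.sum_ite_eq' X a fun _ => c, Finset.sum_ite_eq' X b fun _ => c]
  -- total dual weight is 1
  have hS : (∑ e : Sym2 V, if e ∈ G.edgeSet then y e else 0) = 1 := by
    have two_of_mem : ∀ e ∈ G.edgeSet,
        (∑ v : V, if v ∈ e then y e else 0) = 2 * y e := by
      intro e
      induction e using Sym2.ind with
      | _ a b =>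
        intro he
        have hadj : G.Adj a b := by rwa [SimpleGraph.mem_edgeSet] at he
        rw [pairsum a b hadj.ne Finset.univ (y s(a, b))]
        simp; ring
    have h2 : (2 : ℝ) = ∑ e : Sym2 V, (if e ∈ G.edgeSet then 2 * y e else 0) := by
      calc (2 : ℝ) = ∑ v, w v := hw2.symm
        _ = ∑ v : V, ∑ e : Sym2 V, (if e ∈ G.edgeSet ∧ v ∈ e then y e else 0) :=
            (Finset.sum_congr rfl fun v _ => (hydual' v).symm)
        _ = ∑ e : Sym2 V, ∑ v : V, (if e ∈ G.edgeSet ∧ v ∈ e then y e else 0) :=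
            Finset.sum_comm
        _ = ∑ e : Sym2 V, (if e ∈ G.edgeSet then 2 * y e else 0) := by
            apply Finset.sum_congr rfl
            intro e _
            rw [inner e Finset.univ]
            by_cases he : e ∈ G.edgeSet
            · simp only [he, if_true]; exact two_of_mem e he
            · simp [he]
    have h3 : ∑ e : Sym2 V, (if e ∈ G.edgeSet then 2 * y e else 0)
        = 2 * ∑ e : Sym2 V, (if e ∈ G.edgeSet then y e else 0) := by
      rw [Finset.mul_sum]
      apply Finset.sum_congr rfl
      intro e _
      split_ifs <;> ring
    rw [h3] at h2
    linarith
  -- every vertex cover of G has weight at least 1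
  have edge_cover : ∀ (C : Finset V), IsVC G C → ∀ e ∈ G.edgeSet,
      y e ≤ ∑ v ∈ C, if v ∈ e then y e else 0 := by
    intro C hC e
    induction e using Sym2.ind with
    | _ a b =>
      intro he
      have hadj : G.Adj a b := by rwa [SimpleGraph.mem_edgeSet] at he
      rw [pairsum a b hadj.ne C (y s(a, b))]
      have h0a : (0 : ℝ) ≤ (if a ∈ C then y s(a, b) else 0) := by
        split_ifs; exacts [hy0 _, le_rfl]
      have h0b : (0 : ℝ) ≤ (if b ∈ C then y s(a, b) else 0) := by
        split_ifs; exacts [hy0 _, le_rfl]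
      rcases hC hadj with h | h
      · rw [if_pos h]; linarith
      · rw [if_pos h]; linarith
  have cover_lb : ∀ (C : Finset V), IsVC G C → (1 : ℝ) ≤ ∑ v ∈ C, w v := by
    intro C hC
    have hrw : ∑ v ∈ C, w v
        = ∑ e : Sym2 V, ∑ v ∈ C, (if e ∈ G.edgeSet ∧ v ∈ e then y e else 0) := by
      rw [← Finset.sum_comm]
      exact Finset.sum_congr rfl fun v _ => (hydual' v).symm
    rw [hrw, ← hS]
    apply Finset.sum_le_sum
    intro e _
    rw [inner e C]
    by_cases he : e ∈ G.edgeSet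
    · simp only [he, if_true]; exact edge_cover C hC e he
    · simp [he]
  -- the key per-edge estimate for I ∪ U i
  set f : Fin k → ℝ := fun i => ∑ e : Sym2 V, if e ∈ EUset G I (U i) then y e else 0 with hf
  have edge_IU : ∀ (i : Fin k) (e : Sym2 V),
      (∑ v ∈ I ∪ U i, if e ∈ G.edgeSet ∧ v ∈ e then y e else 0)
        ≤ (if e ∈ G.edgeSet then y e else 0)
          + (if e ∈ EUset G I (U i) then y e else 0) := by
    intro i e
    induction e using Sym2.ind with
    | _ a b =>
      rw [inner]
      have h0 : (0 : ℝ) ≤ (if s(a, b) ∈ EUset G I (U i) then y s(a, b) else 0) := by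
        split_ifs; exacts [hy0 _, le_rfl]
      by_cases he : s(a, b) ∈ G.edgeSet
      · have hadj : G.Adj a b := by rwa [SimpleGraph.mem_edgeSet] at he
        simp only [he, if_true]
        rw [pairsum a b hadj.ne (I ∪ U i) (y s(a, b))]
        by_cases ha : a ∈ I ∪ U i <;> by_cases hb : b ∈ I ∪ U i
        · have hmem : s(a, b) ∈ EUset G I (U i) := by
            rcases Finset.mem_union.mp ha with haI | haU
            · rcases Finset.mem_union.mp hb with hbI | hbU
              · exact absurd hadj (hI haI hbI)
              · exact ⟨b, a, Sym2.eq_swap, hadj.symm, Or.inr ⟨hbU, haI⟩⟩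
            · rcases Finset.mem_union.mp hb with hbI | hbU
              · exact ⟨a, b, rfl, hadj, Or.inr ⟨haU, hbI⟩⟩
              · exact ⟨a, b, rfl, hadj, Or.inl ⟨haU, hbU⟩⟩
          simp [ha, hb, hmem]
        · simp only [ha, hb, if_true, if_false]; linarith
        · simp only [ha, hb, if_true, if_false]; linarith
        · simp only [ha, hb, if_false]
          have := hy0 s(a, b); linarith
      · have hz : y s(a, b) = 0 := hysupp _ he
        simp [he, hz]
  have hCi : ∀ i : Fin k,
      (∑ v ∈ I, w v) + (∑ v ∈ U i, w v) ≤ 1 + f i := by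
    intro i
    have hdisj : Disjoint I (U i) := (hUI i).symm
    have hun : (∑ v ∈ I, w v) + (∑ v ∈ U i, w v) = ∑ v ∈ I ∪ U i, w v :=
      (Finset.sum_union hdisj).symm
    have hrw : ∑ v ∈ I ∪ U i, w v
        = ∑ e : Sym2 V, ∑ v ∈ I ∪ U i, (if e ∈ G.edgeSet ∧ v ∈ e then y e else 0) := by
      rw [← Finset.sum_comm]
      exact Finset.sum_congr rfl fun v _ => (hydual' v).symm
    rw [hun, hrw]
    calc ∑ e : Sym2 V, ∑ v ∈ I ∪ U i, (if e ∈ G.edgeSet ∧ v ∈ e then y e else 0)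
        ≤ ∑ e : Sym2 V, ((if e ∈ G.edgeSet then y e else 0)
            + (if e ∈ EUset G I (U i) then y e else 0)) :=
          Finset.sum_le_sum fun e _ => edge_IU i e
      _ = 1 + f i := by rw [Finset.sum_add_distrib, hS]
  -- the f i sum to at most 1
  have hfsum : ∑ i : Fin k, f i ≤ 1 := by
    rw [hf, ← hS, Finset.sum_comm]
    apply Finset.sum_le_sum
    intro e _
    by_cases hex : ∃ i : Fin k, e ∈ EUset G I (U i)
    · obtain ⟨i0, hi0⟩ := hex
      have heE : e ∈ G.edgeSet := by
        obtain ⟨a, b, rfl, hadj, _⟩ := hi0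
        rwa [SimpleGraph.mem_edgeSet]
      have huniq : ∀ j : Fin k, e ∈ EUset G I (U j) → j = i0 := by
        intro j hj
        by_contra hne
        have hemp := hsep j i0 hne
        have : e ∈ EUset G I (U j) ∩ EUset G I (U i0) := ⟨hj, hi0⟩
        rw [hemp] at this
        exact Set.notMem_empty e this
      have hsum : ∑ j : Fin k, (if e ∈ EUset G I (U j) then y e else 0) = y e := by
        rw [Finset.sum_eq_single i0]
        · simp [hi0]
        · intro j _ hj
          exact if_neg fun hmem => hj (huniq j hmem)
        · intro h; exact absurd (Finset.mem_univ i0) h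
      rw [hsum, if_pos heE]
    · push_neg at hex
      have hall : ∀ j : Fin k, (if e ∈ EUset G I (U j) then y e else 0) = 0 :=
        fun j => if_neg (hex j)
      rw [Finset.sum_congr rfl fun j _ => hall j, Finset.sum_const_zero]
      split_ifs; exacts [hy0 _, le_rfl]
  -- pigeonhole: some f i is at most 1/k
  have hkpos : (0 : ℝ) < (k : ℝ) := by exact_mod_cast hk
  haveI : Nonempty (Fin k) := ⟨⟨0, hk⟩⟩
  have hpig : ∃ i ∈ (Finset.univ : Finset (Fin k)), f i ≤ 1 / (k : ℝ) := by
    apply Finset.exists_le_of_sum_le Finset.univ_nonempty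
    calc ∑ i : Fin k, f i ≤ 1 := hfsum
      _ = ∑ _i : Fin k, (1 / (k : ℝ)) := by
          rw [Finset.sum_const, Finset.card_univ, Fintype.card_fin, nsmul_eq_mul]
          field_simp
  obtain ⟨i, _, hfi⟩ := hpig
  -- OPT bounds
  have hOPT1 : (1 : ℝ) ≤ OPT G w := by
    apply le_csInf
    · exact ⟨∑ v ∈ (Finset.univ : Finset V), w v, Finset.univ,
        fun u v _ => Or.inl (Finset.mem_univ u), rfl⟩
    · rintro t ⟨C, hC, rfl⟩
      exact cover_lb C hC
  have hOPTdel : OPT (Gdel G ↑I) w ≤ ∑ v ∈ U i, w v := by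
    apply csInf_le
    · exact ⟨0, by rintro t ⟨C, _, rfl⟩; exact Finset.sum_nonneg fun v _ => hw0 v⟩
    · exact ⟨U i, hUcov i, rfl⟩
  have h1k : (0 : ℝ) ≤ 1 / (k : ℝ) := by positivity
  have hmul : (1 + 1 / (k : ℝ)) * 1 ≤ (1 + 1 / (k : ℝ)) * OPT G w :=
    mul_le_mul_of_nonneg_left hOPT1 (by linarith)
  have := hCi i
  linarith
end

section
/- Let G = (V,E) be a finite non-bipartite simple graph and I ⊆ V an independent set such that G∖I is bipartite. Then the contraction G/I is non-bipartite; writing 2ρ−1 for its odd girth (ρ ≥ 2 an integer), for every w ∈ Q^W one has w(I) + OPT(G∖I, w) ≤ (1 + 1/ρ) · OPT(G, w). -/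
/-!
Let `t v` be the distance in `G / I` from the contracted vertex to the image of `v`, truncated
at `ρ`. Then `t` vanishes exactly on `I` and changes by at most one along an edge, and an edge
whose ends lie at the same level `m < ρ` closes an odd walk of length `2m + 1` in `G / I`, so
`m ≥ ρ - 1`. Put `x v = coverWeight ρ (t v) / 2ρ`: this is `1 - j / 2ρ` at an even level `j < ρ`
(in particular `1` on `I`), `(j + 1) / 2ρ` at an odd level `j < ρ` and `1 / 2` from level `ρ` on.
On every edge of `G ∖ I` the values of `x` add up to at least `1`, and on every edge of `G` to at
most `1 + 1/ρ`. As `G ∖ I` is bipartite, threshold rounding of the first fact gives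
`OPT(G ∖ I, w) ≤ ∑_{v ∉ I} w(v) x(v)`; a dual certificate `y` turns the second into
`w(I) + ∑_{v ∉ I} w(v) x(v) ≤ (1 + 1/ρ) ∑_e y(e)`, and `∑_e y(e) = w(V) / 2 = 1 ≤ OPT(G, w)`.
Non-bipartiteness of `G / I` holds because `G` maps homomorphically onto it.
-/

open Finset

namespace SimpleGraph

variable {W : Type*} {H : SimpleGraph W} {n : ℕ}

namespace Walk

theorem exists_loop_of_not_isPath [DecidableEq W] {u v : W} (q : H.Walk u v)
    (hq : ¬ q.IsPath) : ∃ (z : W) (a : H.Walk u z) (c : H.Walk z z) (b : H.Walk z v),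
      0 < c.length ∧ q.length = a.length + c.length + b.length := by
  induction q with
  | nil => exact absurd IsPath.nil hq
  | @cons u _ v h p ih =>
    by_cases hp : p.IsPath
    · have hu : u ∈ p.support := by_contra fun hu => hq (hp.cons hu)
      refine ⟨u, nil, cons h (p.takeUntil u hu), p.dropUntil u hu, by simp, ?_⟩
      have := congrArg length (p.take_spec hu)
      simp only [length_append] at this
      simp only [length_cons, length_nil]
      omega
    · obtain ⟨z, a, c, b, hc, hlen⟩ := ih hp
      exact ⟨z, cons h a, c, b, hc, by simp only [length_cons]; omega⟩

theorem isCycle_cons_of_isPath_of_odd {x y : W} {h : H.Adj x y} {q : H.Walk y x}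
    (hq : q.IsPath) (hodd : Odd (cons h q).length) : (cons h q).IsCycle := by
  have hq0 : q.length ≠ 0 := fun h0 => by
    cases q with
    | nil => exact h.ne rfl
    | cons => simp at h0
  rw [isCycle_iff_isPath_tail_and_le_length]
  refine ⟨by simpa using hq, ?_⟩
  obtain ⟨k, hk⟩ := hodd
  simp only [length_cons] at hk ⊢
  omega

theorem le_length_of_odd
    (hcyc : ∀ (v : W) (c : H.Walk v v), c.IsCycle → Odd c.length → n ≤ c.length)
    {x : W} (p : H.Walk x x) (hp : Odd p.length) : n ≤ p.length := by
  classical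
  induction hlen : p.length using Nat.strong_induction_on generalizing x p with
  | _ L ih =>
  cases p with
  | nil => simp at hp
  | cons h q =>
    by_cases hq : q.IsPath
    · exact hlen ▸ hcyc x _ (isCycle_cons_of_isPath_of_odd hq hp) hp
    · -- Cut the walk at a repeated vertex into two shorter closed walks; one of them is odd.
      obtain ⟨z, a, c, b, hc, hqlen⟩ := exists_loop_of_not_isPath q hq
      have hsum : c.length + (cons h (a.append b)).length = L := by
        simp only [length_cons, length_append] at hlen ⊢
        omega
      rcases Nat.even_or_odd c.length with hce | hco
      · have hodd : Odd (cons h (a.append b)).length := by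
          rw [hlen, ← hsum] at hp
          exact (Nat.odd_add'.mp hp).mpr hce
        have := ih _ (by omega) _ hodd rfl
        omega
      · have := ih _ (by simp only [length_cons, length_append] at hsum; omega) c hco rfl
        omega

end Walk

theorem le_two_mul_edist_add_one_of_adj
    (hcyc : ∀ (v : W) (c : H.Walk v v), c.IsCycle → Odd c.length → n ≤ c.length)
    {r x x' : W} (hxx' : H.Adj x x') {m : ℕ} (hx : H.edist r x = m) (hx' : H.edist r x' = m) :
    n ≤ 2 * m + 1 := by
  obtain ⟨p, hp⟩ := exists_walk_of_edist_eq_coe hx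
  obtain ⟨q, hq⟩ := exists_walk_of_edist_eq_coe hx'
  have hlen : (p.append (Walk.cons hxx' q.reverse)).length = 2 * m + 1 := by
    simp only [Walk.length_append, Walk.length_cons, Walk.length_reverse, hp, hq]
    omega
  exact hlen ▸ Walk.le_length_of_odd hcyc _ (hlen ▸ odd_two_mul_add_one m)

noncomputable def truncDist (H : SimpleGraph W) (r : W) (ρ : ℕ) (x : W) : ℕ :=
  (min (H.edist r x) ρ).toNat

variable {r x x' : W} {ρ : ℕ}

theorem truncDist_of_edist_eq_top (h : H.edist r x = ⊤) : H.truncDist r ρ x = ρ := by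
  simp [truncDist, h]

theorem truncDist_of_edist_eq_coe {m : ℕ} (h : H.edist r x = m) :
    H.truncDist r ρ x = min m ρ := by
  rcases le_total m ρ with hm | hm <;> simp [truncDist, h, hm]

theorem truncDist_le : H.truncDist r ρ x ≤ ρ := by
  cases hd : H.edist r x with
  | top => rw [truncDist_of_edist_eq_top hd]
  | coe m => rw [truncDist_of_edist_eq_coe hd]; exact min_le_right _ _

theorem truncDist_eq_zero_iff (hρ : ρ ≠ 0) : H.truncDist r ρ x = 0 ↔ x = r := by
  rw [eq_comm (a := x), ← edist_eq_zero_iff (G := H)]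
  cases hd : H.edist r x with
  | top => simp [truncDist_of_edist_eq_top hd, hρ]
  | coe m => simp [truncDist_of_edist_eq_coe hd]; omega

theorem edist_eq_truncDist (h : H.truncDist r ρ x < ρ) : H.edist r x = H.truncDist r ρ x := by
  cases hd : H.edist r x with
  | top => rw [truncDist_of_edist_eq_top hd] at h; omega
  | coe m => rw [truncDist_of_edist_eq_coe hd] at h ⊢; congr 1; omega

theorem truncDist_le_add_one_of_adj (h : H.Adj x x') :
    H.truncDist r ρ x' ≤ H.truncDist r ρ x + 1 := by
  have htri : H.edist r x' ≤ H.edist r x + 1 :=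
    H.edist_triangle.trans_eq (by rw [edist_eq_one_iff_adj.mpr h])
  cases hd : H.edist r x with
  | top => rw [truncDist_of_edist_eq_top hd]; exact truncDist_le.trans (Nat.le_succ ρ)
  | coe m =>
    cases hd' : H.edist r x' with
    | top => rw [hd, hd'] at htri; simp at htri
    | coe m' =>
      rw [hd, hd'] at htri
      rw [truncDist_of_edist_eq_coe hd, truncDist_of_edist_eq_coe hd']
      have : m' ≤ m + 1 := by exact_mod_cast htri
      omega

theorem le_two_mul_truncDist_add_one
    (hcyc : ∀ (v : W) (c : H.Walk v v), c.IsCycle → Odd c.length → n ≤ c.length)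
    (h : H.Adj x x') (heq : H.truncDist r ρ x = H.truncDist r ρ x')
    (hlt : H.truncDist r ρ x < ρ) : n ≤ 2 * H.truncDist r ρ x + 1 :=
  le_two_mul_edist_add_one_of_adj hcyc h (edist_eq_truncDist hlt)
    (heq ▸ edist_eq_truncDist (heq ▸ hlt))

end SimpleGraph

theorem Gdel_adj {V : Type*} {G : SimpleGraph V} {S : Set V} {a b : V} :
    (Gdel G S).Adj a b ↔ G.Adj a b ∧ a ∉ S ∧ b ∉ S := by
  simp only [Gdel, SimpleGraph.fromRel_adj]
  constructor
  · rintro ⟨-, ⟨h, ha, hb⟩ | ⟨h, hb, ha⟩⟩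
    exacts [⟨h, ha, hb⟩, ⟨h.symm, ha, hb⟩]
  · rintro ⟨h, ha, hb⟩
    exact ⟨h.ne, Or.inl ⟨h, ha, hb⟩⟩

section VertexCover

variable {V : Type*} [Fintype V] {w : V → ℝ}

theorem OPT_le_sum {G : SimpleGraph V} (hw : ∀ v, 0 ≤ w v) {C : Finset V} (hC : IsVC G C) :
    OPT G w ≤ ∑ v ∈ C, w v :=
  csInf_le ⟨0, by rintro t ⟨C', -, rfl⟩; exact sum_nonneg fun v _ => hw v⟩ ⟨C, hC, rfl⟩

theorem le_OPT {G : SimpleGraph V} {r : ℝ} (h : ∀ C : Finset V, IsVC G C → r ≤ ∑ v ∈ C, w v) :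
    r ≤ OPT G w :=
  le_csInf ⟨_, univ, fun u _ _ => Or.inl (mem_univ u), rfl⟩ (by rintro t ⟨C, hC, rfl⟩; exact h C hC)

/-- Threshold rounding: for a 2-colouring `c`, the covers
`{v | c v = 0 ∧ j < n v} ∪ {v | c v = 1 ∧ N ≤ j + n v}`, `j < N`, contain each `v` exactly
`n v` times. -/
theorem OPT_mul_le_of_isBipartite [DecidableEq V] {H : SimpleGraph V} (hH : H.IsBipartite)
    (hw : ∀ v, 0 ≤ w v) {N : ℕ} {n : V → ℕ} (hn : ∀ v, n v ≤ N)
    (hcov : ∀ ⦃a b⦄, H.Adj a b → N ≤ n a + n b) : OPT H w * N ≤ ∑ v, w v * n v := by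
  obtain ⟨c⟩ := hH
  let C (j : ℕ) : Finset V := univ.filter fun v => if c v = 0 then j < n v else N ≤ j + n v
  have hC (j : ℕ) : IsVC H (C j) := by
    intro a b hab
    have := hcov hab
    have hc : c a ≠ c b := c.valid hab
    simp only [C, mem_filter, mem_univ, true_and]
    split_ifs <;> omega
  have hcount (v : V) : #{j ∈ range N | if c v = 0 then j < n v else N ≤ j + n v} = n v := by
    have := hn v
    by_cases hv : c v = 0
    · rw [show {j ∈ range N | _} = range (n v) by ext j; simp [hv]; omega, card_range]
    · rw [show {j ∈ range N | _} = Ico (N - n v) N by ext j; simp [hv]; omega, Nat.card_Ico]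
      omega
  calc OPT H w * N = ∑ j ∈ range N, OPT H w := by simp [mul_comm]
    _ ≤ ∑ j ∈ range N, ∑ v ∈ C j, w v := sum_le_sum fun j _ => OPT_le_sum hw (hC j)
    _ = ∑ v, w v * n v := by
      simp only [C, sum_filter]
      rw [sum_comm]
      refine sum_congr rfl fun v _ => ?_
      rw [← sum_filter, sum_const, hcount, nsmul_eq_mul, mul_comm]

theorem sum_add_OPT_Gdel_mul_le [DecidableEq V] {G : SimpleGraph V} {I : Finset V}
    (hbip : (Gdel G ↑I).IsBipartite) (hw : ∀ v, 0 ≤ w v) {N : ℕ} {f : V → ℕ}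
    (hf : ∀ v, f v ≤ N) (hfI : ∀ v ∈ I, f v = N)
    (hcov : ∀ ⦃a b⦄, G.Adj a b → a ∉ I → b ∉ I → N ≤ f a + f b) :
    (∑ v ∈ I, w v + OPT (Gdel G ↑I) w) * N ≤ ∑ v, w v * f v := by
  let n (v : V) : ℕ := if v ∈ I then 0 else f v
  have hround : OPT (Gdel G ↑I) w * N ≤ ∑ v, w v * n v := by
    refine OPT_mul_le_of_isBipartite hbip hw (fun v => ?_) fun a b hab => ?_
    · unfold n; split_ifs <;> simp [hf]
    · obtain ⟨hab, ha, hb⟩ := Gdel_adj.mp hab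
      rw [mem_coe] at ha hb
      simpa [n, ha, hb] using hcov hab ha hb
  have hsplit : ∑ v, w v * f v = (∑ v ∈ I, w v) * N + ∑ v, w v * n v := by
    rw [← univ_inter I, ← sum_ite_mem, sum_mul, ← sum_add_distrib]
    refine sum_congr rfl fun v _ => ?_
    by_cases hv : v ∈ I <;> simp [n, hv, hfI]
  rw [hsplit, add_mul]
  linarith

theorem sum_ite_mem_sym2 [DecidableEq V] (f : V → ℝ) {a b : V} (hab : a ≠ b) :
    ∑ v, (if v ∈ s(a, b) then f v else 0) = f a + f b := by
  rw [← sum_filter, ← sum_pair hab]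
  congr 1
  ext
  simp

namespace IsDualCert

variable [DecidableEq V] {G : SimpleGraph V} {y : Sym2 V → ℝ}

theorem sum_mul_eq (hy : IsDualCert G w y) (f : V → ℝ) :
    ∑ v, w v * f v = ∑ e, y e * ∑ v, if v ∈ e then f v else 0 := by
  simp only [← hy.2.2, ysum, sum_mul, mul_sum]
  rw [sum_comm]
  refine sum_congr rfl fun e _ => sum_congr rfl fun v _ => ?_
  by_cases he : e ∈ G.edgeSet
  · by_cases hv : v ∈ e <;> simp [he, hv]
  · simp [he, hy.2.1 e he]

theorem sum_mul_le (hy : IsDualCert G w y) {f : V → ℝ} {c : ℝ}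
    (hf : ∀ ⦃a b⦄, G.Adj a b → f a + f b ≤ c) : ∑ v, w v * f v ≤ c * ∑ e, y e := by
  rw [hy.sum_mul_eq, mul_sum]
  refine sum_le_sum fun e _ => ?_
  induction e using Sym2.ind with
  | _ a b =>
  by_cases hab : G.Adj a b
  · rw [sum_ite_mem_sym2 f hab.ne, mul_comm c]
    exact mul_le_mul_of_nonneg_left (hf hab) (hy.1 _)
  · simp [hy.2.1 _ (G.mem_edgeSet.not.mpr hab)]

theorem le_sum_mul (hy : IsDualCert G w y) {f : V → ℝ} {c : ℝ}
    (hf : ∀ ⦃a b⦄, G.Adj a b → c ≤ f a + f b) : c * ∑ e, y e ≤ ∑ v, w v * f v := by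
  have := hy.sum_mul_le (f := -f) (c := -c) fun a b hab => by
    simp only [Pi.neg_apply]; linarith [hf hab]
  simp only [Pi.neg_apply, mul_neg, sum_neg_distrib, neg_mul] at this
  linarith

theorem two_mul_sum_eq (hy : IsDualCert G w y) : 2 * ∑ e, y e = ∑ v, w v := by
  have h := le_antisymm (hy.sum_mul_le (f := fun _ => 1) (c := 2) fun _ _ _ => by norm_num)
    (hy.le_sum_mul (f := fun _ => 1) (c := 2) fun _ _ _ => by norm_num)
  simpa using h.symm

theorem sum_le_OPT (hy : IsDualCert G w y) : ∑ e, y e ≤ OPT G w := by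
  refine le_OPT fun C hC => ?_
  have := hy.le_sum_mul (f := fun v => if v ∈ C then 1 else 0) (c := 1) fun a b hab => by
    rcases hC hab with h | h <;> simp only [h, if_true] <;> split_ifs <;> norm_num
  simpa [← sum_filter] using this

end IsDualCert

end VertexCover

section Contraction

variable {V : Type*} [DecidableEq V] {G : SimpleGraph V} {I : Finset V}

def contractMap (I : Finset V) (v : V) : Option {u : V // u ∉ (↑I : Set V)} :=
  if h : v ∈ I then none else some ⟨v, by simpa using h⟩

theorem contractMap_eq_none_iff {v : V} : contractMap I v = none ↔ v ∈ I := by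
  unfold contractMap; split_ifs with h <;> simp [h]

def contractHom (hI : IsIndep G I) : G →g contract G ↑I where
  toFun := contractMap I
  map_rel' {a b} hab := by
    unfold contractMap
    split_ifs with ha hb hb
    · exact absurd hab (hI ha hb)
    · exact ⟨by simp, Or.inr ⟨a, by simpa using ha, hab.symm⟩⟩
    · exact ⟨by simp, Or.inl ⟨b, by simpa using hb, hab⟩⟩
    · exact ⟨by simpa using hab.ne, Or.inl hab⟩

noncomputable def contractLevel (G : SimpleGraph V) (I : Finset V) (ρ : ℕ) (v : V) : ℕ :=
  (contract G ↑I).truncDist none ρ (contractMap I v)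

variable {ρ n : ℕ} {a b : V}

theorem contractLevel_eq_zero_iff (hρ : ρ ≠ 0) : contractLevel G I ρ a = 0 ↔ a ∈ I :=
  (SimpleGraph.truncDist_eq_zero_iff hρ).trans contractMap_eq_none_iff

theorem contractLevel_le_add_one_of_adj (hI : IsIndep G I) (hab : G.Adj a b) :
    contractLevel G I ρ b ≤ contractLevel G I ρ a + 1 :=
  SimpleGraph.truncDist_le_add_one_of_adj ((contractHom hI).map_adj hab)

theorem le_two_mul_contractLevel_add_one (hI : IsIndep G I)
    (hcyc : ∀ (v) (c : (contract G ↑I).Walk v v), c.IsCycle → Odd c.length → n ≤ c.length)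
    (hab : G.Adj a b) (heq : contractLevel G I ρ a = contractLevel G I ρ b)
    (hlt : contractLevel G I ρ a < ρ) : n ≤ 2 * contractLevel G I ρ a + 1 :=
  SimpleGraph.le_two_mul_truncDist_add_one hcyc ((contractHom hI).map_adj hab) heq hlt

end Contraction

def coverWeight (ρ j : ℕ) : ℕ :=
  if ρ ≤ j then ρ else if j % 2 = 0 then 2 * ρ - j else j + 1

theorem coverWeight_le (ρ j : ℕ) : coverWeight ρ j ≤ 2 * ρ := by
  unfold coverWeight; split_ifs <;> omega

theorem coverWeight_zero (ρ : ℕ) : coverWeight ρ 0 = 2 * ρ := by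
  unfold coverWeight; split_ifs <;> omega

theorem coverWeight_add_le {ρ i j : ℕ} (hji : j ≤ i + 1) (hij : i ≤ j + 1)
    (hflat : i = j → i < ρ → 2 * ρ - 1 ≤ 2 * i + 1) :
    coverWeight ρ i + coverWeight ρ j ≤ 2 * ρ + 2 := by
  unfold coverWeight; split_ifs <;> omega

theorem le_coverWeight_add {ρ i j : ℕ} (hji : j ≤ i + 1) (hij : i ≤ j + 1)
    (hflat : i = j → i < ρ → 2 * ρ - 1 ≤ 2 * i + 1) (hi : i ≠ 0) (hj : j ≠ 0) :
    2 * ρ ≤ coverWeight ρ i + coverWeight ρ j := by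
  unfold coverWeight; split_ifs <;> omega

/-- for an independent bipartizing set `I`, the contraction `G/I` is
non-bipartite, and if its odd girth is `2ρ-1` then the round-and-bipartize value is at most
`(1 + 1/ρ) · OPT(G,w)` for every `w ∈ Q^W`. -/
theorem round_bipartize_indep_set {V : Type*} [Fintype V] [DecidableEq V]
    (G : SimpleGraph V) (hnb : ¬ G.Colorable 2)
    (I : Finset V) (hI : IsIndep G I) (hbip : (Gdel G ↑I).Colorable 2) :
    ¬ (contract G ↑I).Colorable 2 ∧
      ∀ ρ : ℕ, 2 ≤ ρ → HasOddGirth (contract G ↑I) (2 * ρ - 1) →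
        ∀ w : V → ℝ, memQW G w →
          ∑ v ∈ I, w v + OPT (Gdel G ↑I) w ≤ (1 + 1 / (ρ : ℝ)) * OPT G w := by
  refine ⟨fun hcol => hnb (hcol.of_hom (contractHom hI)), ?_⟩
  rintro ρ hρ hog w ⟨hw0, hw2, y, hy⟩
  have hstep {a b : V} (hab : G.Adj a b) := contractLevel_le_add_one_of_adj (ρ := ρ) hI hab
  have hflat {a b : V} (hab : G.Adj a b) :=
    le_two_mul_contractLevel_add_one (ρ := ρ) hI hog.2.2 hab
  have hlower := sum_add_OPT_Gdel_mul_le hbip hw0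
    (f := fun v => coverWeight ρ (contractLevel G I ρ v)) (fun v => coverWeight_le ρ _)
    (fun v hv => by rw [(contractLevel_eq_zero_iff (by omega)).mpr hv, coverWeight_zero])
    fun a b hab ha hb => le_coverWeight_add (hstep hab) (hstep hab.symm) (hflat hab)
      ((contractLevel_eq_zero_iff (by omega)).not.mpr ha)
      ((contractLevel_eq_zero_iff (by omega)).not.mpr hb)
  have hupper : ∑ v, w v * (coverWeight ρ (contractLevel G I ρ v) : ℝ) ≤ (2 * ρ + 2) * ∑ e, y e :=
    hy.sum_mul_le fun a b hab => by
      exact_mod_cast coverWeight_add_le (hstep hab) (hstep hab.symm) (hflat hab)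
  have hy1 : ∑ e, y e = 1 := by linarith [hy.two_mul_sum_eq]
  have hρ0 : (0 : ℝ) < ρ := by positivity
  calc ∑ v ∈ I, w v + OPT (Gdel G ↑I) w ≤ 1 + 1 / (ρ : ℝ) := by
        rw [one_add_div hρ0.ne', le_div_iff₀ hρ0]
        push_cast at hlower
        nlinarith
    _ ≤ (1 + 1 / (ρ : ℝ)) * OPT G w :=
        le_mul_of_one_le_right (by positivity) (hy1 ▸ hy.sum_le_OPT)
end

section
/- Let G = (V,E) be a finite non-bipartite simple graph and I ⊆ V an independent set such that G∖I is bipartite, and suppose the contraction G/I has odd girth 2ρ−1 (ρ ≥ 2 an integer). Each odd cycle of G/I of length 2ρ−1 passes through the contracted vertex v^I and corresponds in G to a path a₀a₁…a_{2ρ−3} in G∖I together with edges {u, a₀} and {u', a_{2ρ−3}} with u, u' ∈ I (possibly u = u'); to such a cycle C associate y^C : E → ℝ≥0 taking value 1/ρ on {u,a₀}, on {u',a_{2ρ−3}} and on the path edges {a_{2i−1}, a_{2i}} for 1 ≤ i ≤ ρ−2, and 0 on all other edges, and define w^C(v) := y^C(δ(v)). Then for every convex combination w of the functions w^C over all such shortest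 odd cycles C: OPT(G,w) = 1, w(I) = 2/ρ, OPT(G∖I, w) = (ρ−1)/ρ, and hence w(I) + OPT(G∖I, w) = (1 + 1/ρ) · OPT(G, w). -/
open Finset

/-- The data of a shortest odd cycle of `G/I` through the contracted vertex: a path
`a₀ a₁ … a_{2ρ-3}` in `G ∖ I` together with attachment vertices `u, u' ∈ I` adjacent to its
endpoints. -/
def ShortCycData {V : Type*} (G : SimpleGraph V) (I : Finset V) (ρ : ℕ)
    (a : ℕ → V) (u u' : V) : Prop :=
  u ∈ I ∧ u' ∈ I ∧ (∀ i ≤ 2 * ρ - 3, a i ∉ I) ∧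
    (∀ i < 2 * ρ - 3, G.Adj (a i) (a (i + 1))) ∧
    (∀ i ≤ 2 * ρ - 3, ∀ j ≤ 2 * ρ - 3, a i = a j → i = j) ∧
    G.Adj u (a 0) ∧ G.Adj u' (a (2 * ρ - 3))

/-- The dual function `y^C` of such a shortest odd cycle: value `1/ρ` on the two attachment
edges and on the path edges `{a_{2i-1}, a_{2i}}` for `1 ≤ i ≤ ρ-2`, and `0` elsewhere. -/
noncomputable def yCyc {V : Type*} [DecidableEq V] (ρ : ℕ) (a : ℕ → V) (u u' : V) : Sym2 V → ℝ :=
  fun e => if e = s(u, a 0) ∨ e = s(u', a (2 * ρ - 3)) ∨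
      ∃ i ∈ Finset.Icc 1 (ρ - 2), e = s(a (2 * i - 1), a (2 * i))
    then 1 / (ρ : ℝ) else 0


/-! Lift a shortest odd cycle of `G/I` to the walk `x₀ = u, x₁ = a₀, …, x_{2ρ-2} = a_{2ρ-3},
x_{2ρ-1} = u'` of `G`. Then `y^C` is `1/ρ` on the `ρ` distinct edges `x_{2i} x_{2i+1}`, so `w^C(C')`
is `1/ρ` times the number of indices `k` with `x_k ∈ C'`. The walk visits `I` exactly twice; a
vertex cover of `G` contains an endpoint of each edge `x_{2i} x_{2i+1}`, and one of `G ∖ I` an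
endpoint of each of the `ρ - 1` edges `x_{2i+1} x_{2i+2}`, which gives the lower bounds.

Both bounds are attained simultaneously for all shortest odd cycles. For `G ∖ I`, take one colour
class of a 2-colouring of `G ∖ I`. For `G`, take the complement of the set of vertices at even
distance `< ρ - 1` from the contracted vertex of `G/I`, together with the vertices of one colour at
distance `ρ - 1`: since every odd closed walk of `G/I` has length `≥ 2ρ - 1`, this set is
independent, and along a shortest odd cycle `x_k` is at distance `min k (2ρ - 1 - k)`, so the set
contains exactly one endpoint of each edge `x_{2i} x_{2i+1}`. -/

lemma Finset.sum_range_two_mul {M : Type*} [AddCommMonoid M] (f : ℕ → M) (n : ℕ) :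
    ∑ k ∈ range (2 * n), f k = ∑ i ∈ range n, (f (2 * i) + f (2 * i + 1)) := by
  induction n with
  | zero => simp
  | succ n ih =>
    rw [show 2 * (n + 1) = 2 * n + 1 + 1 by ring, sum_range_succ, sum_range_succ, ih,
      sum_range_succ, add_assoc]

lemma fin_two_eq_zero_iff_of_ne {c d : Fin 2} (h : c ≠ d) : c = 0 ↔ d ≠ 0 := by
  revert c d; decide

namespace SimpleGraph

variable {W : Type*} {H : SimpleGraph W}

lemma exists_walk_length_eq_of_adj_succ {f : ℕ → W} {n : ℕ}
    (h : ∀ i < n, H.Adj (f i) (f (i + 1))) : ∀ j ≤ n, ∃ p : H.Walk (f 0) (f j), p.length = j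
  | 0, _ => ⟨.nil, rfl⟩
  | j + 1, hj =>
    let ⟨p, hp⟩ := exists_walk_length_eq_of_adj_succ h j (by omega)
    ⟨p.concat (h j (by omega)), by rw [Walk.length_concat, hp]⟩

namespace Walk

lemma exists_closed_subwalk_of_not_isPath [DecidableEq W] :
    ∀ {u v : W} (p : H.Walk u v), ¬ p.IsPath →
      ∃ (x : W) (p₁ : H.Walk u x) (c : H.Walk x x) (p₂ : H.Walk x v),
        0 < c.length ∧ p.length = p₁.length + c.length + p₂.length
  | _, _, nil, hp => absurd IsPath.nil hp
  | u, _, cons h q, hp => by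
    rw [cons_isPath_iff, not_and_or, not_not] at hp
    rcases hp with hq | hu
    · obtain ⟨x, p₁, c, p₂, hc, hlen⟩ := exists_closed_subwalk_of_not_isPath q hq
      exact ⟨x, cons h p₁, c, p₂, hc, by simp only [length_cons, hlen]; omega⟩
    · have hlen := congrArg length (q.take_spec hu)
      rw [length_append] at hlen
      exact ⟨u, nil, cons h (q.takeUntil u hu), q.dropUntil u hu, by simp,
        by simp only [length_cons, length_nil]; omega⟩

theorem exists_isCycle_odd_length_le {v : W} (p : H.Walk v v) (hp : Odd p.length) :
    ∃ (w : W) (c : H.Walk w w), c.IsCycle ∧ Odd c.length ∧ c.length ≤ p.length := by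
  classical
  induction hn : p.length using Nat.strong_induction_on generalizing v with
  | _ n ih =>
  cases p with
  | nil => simp at hp
  | @cons _ w _ h q =>
    by_cases hq : q.IsPath
    · refine ⟨v, cons h q, (cons_isCycle_iff q h).mpr ⟨hq, fun he => ?_⟩, hp, hn.le⟩
      have := hq.length_eq_one_of_mem_edges (Sym2.eq_swap ▸ he)
      rw [length_cons, this] at hp
      exact absurd hp (by decide)
    -- split off a closed subwalk `c`: one of `c` and the rest is a shorter odd closed walk
    · obtain ⟨x, p₁, c, p₂, hc, hlen⟩ := exists_closed_subwalk_of_not_isPath q hq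
      have hr : (cons h (p₁.append p₂)).length = p₁.length + p₂.length + 1 := by
        simp only [length_cons, length_append]
      have hsplit : n = c.length + (cons h (p₁.append p₂)).length := by
        rw [hr, ← hn, length_cons, hlen]; omega
      rw [hn, hsplit] at hp
      rcases Nat.even_or_odd c.length with hce | hco
      · obtain ⟨y, d, hd, hdo, hdle⟩ := ih _ (by omega) _ ((Nat.odd_add'.mp hp).mpr hce) rfl
        exact ⟨y, d, hd, hdo, by omega⟩
      · obtain ⟨y, d, hd, hdo, hdle⟩ := ih _ (by omega) c hco rfl
        exact ⟨y, d, hd, hdo, by omega⟩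

end Walk

end SimpleGraph

namespace HasOddGirth

open SimpleGraph

variable {W : Type*} {H : SimpleGraph W} {L : ℕ}

lemma le_length_of_odd (h : HasOddGirth H L) {v : W} (p : H.Walk v v) (hp : Odd p.length) :
    L ≤ p.length :=
  let ⟨_, c, hc, hco, hle⟩ := p.exists_isCycle_odd_length_le hp
  (h.2.2 _ c hc hco).trans hle

lemma dist_eq_min (h : HasOddGirth H L) {r x : W} (p q : H.Walk r x)
    (hpq : p.length + q.length = L) : H.dist r x = min p.length q.length := by
  obtain ⟨t, ht⟩ := p.reachable.exists_walk_length_eq_dist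
  have hp := dist_le p
  have hq := dist_le q
  have hL := Nat.odd_iff.mp h.1
  -- closing `p` and `q` with a shortest walk `t` gives lengths summing to `L + 2 dist`, one odd
  have key : ∀ s : H.Walk r x, (s.length + H.dist r x) % 2 = 1 → L ≤ s.length + H.dist r x :=
    fun s hs => by
      have := h.le_length_of_odd (s.append t.reverse)
        (by rw [Nat.odd_iff, Walk.length_append, Walk.length_reverse, ht]; exact hs)
      rwa [Walk.length_append, Walk.length_reverse, ht] at this
  rcases Nat.mod_two_eq_zero_or_one (p.length + H.dist r x) with he | ho
  · have := key q (by omega)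
    omega
  · have := key p ho
    omega

lemma le_dist_add_dist_add_one (h : HasOddGirth H L) {r x y : W} (hx : H.Reachable r x)
    (hxy : H.Adj x y) (heven : Even (H.dist r x + H.dist r y)) :
    L ≤ H.dist r x + H.dist r y + 1 := by
  obtain ⟨px, hpx⟩ := hx.exists_walk_length_eq_dist
  obtain ⟨py, hpy⟩ := (hx.trans hxy.reachable).exists_walk_length_eq_dist
  have hlen : (px.append (.cons hxy py.reverse)).length = H.dist r x + H.dist r y + 1 := by
    simp only [Walk.length_append, Walk.length_cons, Walk.length_reverse, hpx, hpy]
    omega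
  rw [← hlen]
  exact h.le_length_of_odd _ (hlen ▸ heven.add_one)

end HasOddGirth

open Classical in
noncomputable def contractProj {V : Type*} (S : Set V) (v : V) : Option {v : V // v ∉ S} :=
  if h : v ∈ S then none else some ⟨v, h⟩

section Contract

variable {V : Type*} {G : SimpleGraph V} {S : Set V} {v x y : V}

lemma contractProj_of_mem (h : v ∈ S) : contractProj S v = none := dif_pos h

lemma contractProj_of_not_mem (h : v ∉ S) : contractProj S v = some ⟨v, h⟩ := dif_neg h

lemma contract_adj_contractProj (hxy : G.Adj x y) (h : x ∉ S ∨ y ∉ S) :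
    (contract G S).Adj (contractProj S x) (contractProj S y) := by
  by_cases hx : x ∈ S <;> by_cases hy : y ∈ S
  · tauto
  · rw [contractProj_of_mem hx, contractProj_of_not_mem hy, contract, SimpleGraph.fromRel_adj]
    exact ⟨by simp, Or.inr ⟨x, hx, hxy.symm⟩⟩
  · rw [contractProj_of_not_mem hx, contractProj_of_mem hy, contract, SimpleGraph.fromRel_adj]
    exact ⟨by simp, Or.inl ⟨y, hy, hxy⟩⟩
  · rw [contractProj_of_not_mem hx, contractProj_of_not_mem hy, contract, SimpleGraph.fromRel_adj]
    exact ⟨by simpa using hxy.ne, Or.inl hxy⟩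

lemma Gdel_adj_s11 : (Gdel G S).Adj x y ↔ G.Adj x y ∧ x ∉ S ∧ y ∉ S := by
  rw [Gdel, SimpleGraph.fromRel_adj]
  constructor
  · rintro ⟨-, h | ⟨h, hy, hx⟩⟩
    exacts [h, ⟨h.symm, hx, hy⟩]
  · exact fun h => ⟨h.1.ne, Or.inl h⟩

end Contract

lemma isVC_Gdel_filter_eq_zero {V : Type*} [Fintype V] [DecidableEq V] {G : SimpleGraph V}
    {I : Finset V} (col : (Gdel G ↑I).Coloring (Fin 2)) :
    IsVC (Gdel G ↑I) (Iᶜ.filter (col · = 0)) := by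
  intro x y hxy
  obtain ⟨-, hx, hy⟩ := Gdel_adj_s11.mp hxy
  simp only [mem_filter, mem_compl, ← mem_coe (s := I), hx, hy, not_false_eq_true, true_and]
  exact or_iff_not_imp_left.mpr (fin_two_eq_zero_iff_of_ne (col.valid hxy).symm).mpr

lemma OPT_eq_of_isVC {V : Type*} [Fintype V] {G : SimpleGraph V} {w : V → ℝ} {C₀ : Finset V}
    {t : ℝ} (hC₀ : IsVC G C₀) (ht : ∑ v ∈ C₀, w v = t)
    (hle : ∀ C, IsVC G C → t ≤ ∑ v ∈ C, w v) : OPT G w = t :=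
  IsLeast.csInf_eq ⟨⟨C₀, hC₀, ht.symm⟩, by rintro _ ⟨C, hC, rfl⟩; exact hle C hC⟩

lemma sum_mul_eq_of_sum_eq_one {ι : Type*} {s : Finset ι} {lam f : ι → ℝ} {c : ℝ}
    (h₁ : ∑ i ∈ s, lam i = 1) (hf : ∀ i ∈ s, f i = c) : ∑ i ∈ s, lam i * f i = c := by
  rw [sum_congr rfl fun i hi => by rw [hf i hi], ← sum_mul, h₁, one_mul]

lemma le_sum_mul_of_sum_eq_one {ι : Type*} {s : Finset ι} {lam f : ι → ℝ} {c : ℝ}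
    (h₀ : ∀ i ∈ s, 0 ≤ lam i) (h₁ : ∑ i ∈ s, lam i = 1) (hf : ∀ i ∈ s, c ≤ f i) :
    c ≤ ∑ i ∈ s, lam i * f i :=
  calc c = ∑ i ∈ s, lam i * c := by rw [← sum_mul, h₁, one_mul]
    _ ≤ _ := sum_le_sum fun i hi => mul_le_mul_of_nonneg_left (hf i hi) (h₀ i hi)

def visitCount {V : Type*} [DecidableEq V] (x : ℕ → V) (n : ℕ) (C : Finset V) : ℝ :=
  ∑ k ∈ range n, if x k ∈ C then 1 else 0

section visitCount

variable {V : Type*} [DecidableEq V] {x : ℕ → V} {C : Finset V}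

lemma visitCount_add_two (n : ℕ) :
    visitCount x (n + 2) C = (if x 0 ∈ C then 1 else 0) + visitCount (fun k => x (k + 1)) n C +
      (if x (n + 1) ∈ C then 1 else 0) := by
  rw [visitCount, sum_range_succ, sum_range_succ', visitCount, add_comm (∑ _ ∈ _, _)]

lemma visitCount_eq_zero {n : ℕ} (h : ∀ k < n, x k ∉ C) : visitCount x n C = 0 :=
  sum_eq_zero fun k hk => if_neg (h k (mem_range.mp hk))

lemma le_visitCount_of_pairs {n : ℕ} (h : ∀ i < n, x (2 * i) ∈ C ∨ x (2 * i + 1) ∈ C) :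
    (n : ℝ) ≤ visitCount x (2 * n) C := by
  rw [visitCount, sum_range_two_mul]
  calc (n : ℝ) = ∑ _i ∈ range n, (1 : ℝ) := by simp
    _ ≤ _ := sum_le_sum fun i hi => by
      rcases h i (mem_range.mp hi) with h' | h' <;> simp only [h', if_true] <;> split_ifs <;>
        norm_num

lemma visitCount_eq_of_pairs {n : ℕ} (h : ∀ i < n, x (2 * i) ∈ C ↔ x (2 * i + 1) ∉ C) :
    visitCount x (2 * n) C = n := by
  rw [visitCount, sum_range_two_mul]
  calc _ = ∑ _i ∈ range n, (1 : ℝ) := sum_congr rfl fun i hi => by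
          have := h i (mem_range.mp hi)
          by_cases h' : x (2 * i) ∈ C <;> simp_all
    _ = n := by simp

end visitCount

def cycleVertex {V : Type*} (ρ : ℕ) (a : ℕ → V) (u u' : V) (k : ℕ) : V :=
  if k = 0 then u else if k = 2 * ρ - 1 then u' else a (k - 1)

lemma yCyc_eq {V : Type*} [DecidableEq V] {ρ : ℕ} {a : ℕ → V} {u u' : V} (hρ : 2 ≤ ρ)
    (e : Sym2 V) : yCyc ρ a u u' e =
      if ∃ i < ρ, s(cycleVertex ρ a u u' (2 * i), cycleVertex ρ a u u' (2 * i + 1)) = e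
      then 1 / (ρ : ℝ) else 0 := by
  refine if_congr ?_ rfl rfl
  simp only [cycleVertex, mem_Icc]
  constructor
  · rintro (rfl | rfl | ⟨i, hi, rfl⟩)
    · exact ⟨0, by omega, by simp [show 1 ≠ 2 * ρ - 1 by omega]⟩
    · refine ⟨ρ - 1, by omega, ?_⟩
      rw [if_neg (by omega), if_neg (by omega), if_neg (by omega), if_pos (by omega),
        show 2 * (ρ - 1) - 1 = 2 * ρ - 3 by omega, Sym2.eq_swap]
    · refine ⟨i, by omega, ?_⟩
      rw [if_neg (by omega), if_neg (by omega), if_neg (by omega), if_neg (by omega),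
        show 2 * i + 1 - 1 = 2 * i by omega]
  · rintro ⟨i, hi, rfl⟩
    by_cases h0 : i = 0
    · subst h0; simp [show 1 ≠ 2 * ρ - 1 by omega]
    by_cases h1 : i = ρ - 1
    · subst h1
      right; left
      rw [if_neg (by omega), if_neg (by omega), if_neg (by omega), if_pos (by omega),
        show 2 * (ρ - 1) - 1 = 2 * ρ - 3 by omega, Sym2.eq_swap]
    · right; right
      refine ⟨i, by omega, ?_⟩
      rw [if_neg (by omega), if_neg (by omega), if_neg (by omega), if_neg (by omega),
        show 2 * i + 1 - 1 = 2 * i by omega]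

def layerSet {V : Type*} (G : SimpleGraph V) (I : Finset V) (ρ : ℕ) (col : V → Fin 2) : Set V :=
  {v | (contract G ↑I).Reachable none (contractProj ↑I v) ∧
    Even ((contract G ↑I).dist none (contractProj ↑I v)) ∧
    ((contract G ↑I).dist none (contractProj ↑I v) < ρ - 1 ∨
      (contract G ↑I).dist none (contractProj ↑I v) = ρ - 1 ∧ col v = 0)}

lemma not_adj_of_mem_layerSet {V : Type*} {G : SimpleGraph V} {I : Finset V} {ρ : ℕ}
    (hρ : 2 ≤ ρ) (hI : IsIndep G I) (hog : HasOddGirth (contract G ↑I) (2 * ρ - 1))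
    (col : (Gdel G ↑I).Coloring (Fin 2)) {x y : V} (hx : x ∈ layerSet G I ρ col)
    (hy : y ∈ layerSet G I ρ col) : ¬ G.Adj x y := by
  intro hxy
  obtain ⟨hrx, hex, hdx⟩ := hx
  obtain ⟨-, hey, hdy⟩ := hy
  by_cases hxyI : x ∈ I ∧ y ∈ I
  · exact hI hxyI.1 hxyI.2 hxy
  have hsum := hog.le_dist_add_dist_add_one hrx
    (contract_adj_contractProj hxy (not_and_or.mp hxyI)) (hex.add hey)
  -- both `x` and `y` lie at distance exactly `ρ - 1`, hence outside `I` and of colour `0`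
  have hfar : ∀ {v}, (contract G ↑I).dist none (contractProj ↑I v) < ρ - 1 ∨
      (contract G ↑I).dist none (contractProj ↑I v) = ρ - 1 ∧ col v = 0 →
      ρ - 1 ≤ (contract G ↑I).dist none (contractProj ↑I v) → v ∉ I ∧ col v = 0 := by
    intro v hv hle
    refine ⟨fun hvI => ?_, (hv.resolve_left (by omega)).2⟩
    rw [contractProj_of_mem (mem_coe.mpr hvI), SimpleGraph.dist_self] at hle
    omega
  obtain ⟨hxI, hcx⟩ := hfar hdx (by omega)
  obtain ⟨hyI, hcy⟩ := hfar hdy (by omega)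
  exact col.valid (Gdel_adj_s11.mpr ⟨hxy, hxI, hyI⟩) (hcx.trans hcy.symm)

open Classical in
lemma isVC_compl_layerSet {V : Type*} [Fintype V] {G : SimpleGraph V} {I : Finset V} {ρ : ℕ}
    (hρ : 2 ≤ ρ) (hI : IsIndep G I) (hog : HasOddGirth (contract G ↑I) (2 * ρ - 1))
    (col : (Gdel G ↑I).Coloring (Fin 2)) : IsVC G (univ.filter (· ∉ layerSet G I ρ col)) := by
  intro x y hxy
  by_contra! h
  simp only [mem_filter, mem_univ, true_and, not_not] at h
  exact not_adj_of_mem_layerSet hρ hI hog col h.1 h.2 hxy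

namespace ShortCycData

variable {V : Type*} {G : SimpleGraph V} {I : Finset V} {ρ : ℕ} {a : ℕ → V} {u u' : V}

lemma cycleVertex_mem_iff (hρ : 2 ≤ ρ) (hd : ShortCycData G I ρ a u u') {k : ℕ}
    (hk : k < 2 * ρ) : cycleVertex ρ a u u' k ∈ I ↔ k = 0 ∨ k = 2 * ρ - 1 := by
  obtain ⟨hu, hu', haI, -⟩ := hd
  unfold cycleVertex
  split_ifs with h0 h1
  · simp [hu, h0]
  · simp [hu', h1]
  · simp [h0, h1, haI (k - 1) (by omega)]

lemma adj_cycleVertex (hρ : 2 ≤ ρ) (hd : ShortCycData G I ρ a u u') {k : ℕ}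
    (hk : k < 2 * ρ - 1) : G.Adj (cycleVertex ρ a u u' k) (cycleVertex ρ a u u' (k + 1)) := by
  obtain ⟨-, -, -, hadj, -, hua, hua'⟩ := hd
  unfold cycleVertex
  rcases (by omega : k = 0 ∨ k = 2 * ρ - 2 ∨ 0 < k ∧ k < 2 * ρ - 2) with rfl | rfl | hk'
  · rw [if_pos rfl, if_neg (by omega), if_neg (by omega), zero_add, Nat.sub_self]
    exact hua
  · rw [if_neg (by omega), if_neg (by omega), if_neg (by omega), if_pos (by omega),
      show 2 * ρ - 2 - 1 = 2 * ρ - 3 by omega]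
    exact hua'.symm
  · rw [if_neg (by omega), if_neg (by omega), if_neg (by omega), if_neg (by omega),
      show k + 1 - 1 = k - 1 + 1 by omega]
    exact hadj (k - 1) (by omega)

lemma adj_Gdel_cycleVertex (hρ : 2 ≤ ρ) (hd : ShortCycData G I ρ a u u') {k : ℕ} (hk₀ : 0 < k)
    (hk : k < 2 * ρ - 2) :
    (Gdel G ↑I).Adj (cycleVertex ρ a u u' k) (cycleVertex ρ a u u' (k + 1)) := by
  refine Gdel_adj_s11.mpr ⟨hd.adj_cycleVertex hρ (by omega), ?_, ?_⟩ <;>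
    rw [mem_coe, hd.cycleVertex_mem_iff hρ (by omega)] <;> omega

lemma eq_or_endpoints_of_cycleVertex_eq (hρ : 2 ≤ ρ) (hd : ShortCycData G I ρ a u u') {k l : ℕ}
    (hk : k < 2 * ρ) (hl : l < 2 * ρ) (hkl : cycleVertex ρ a u u' k = cycleVertex ρ a u u' l) :
    k = l ∨ (k = 0 ∨ k = 2 * ρ - 1) ∧ (l = 0 ∨ l = 2 * ρ - 1) := by
  by_cases hkI : cycleVertex ρ a u u' k ∈ I
  · right
    exact ⟨(hd.cycleVertex_mem_iff hρ hk).mp hkI, (hd.cycleVertex_mem_iff hρ hl).mp (hkl ▸ hkI)⟩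
  · left
    have hlI : cycleVertex ρ a u u' l ∉ I := hkl ▸ hkI
    rw [hd.cycleVertex_mem_iff hρ hk] at hkI
    rw [hd.cycleVertex_mem_iff hρ hl] at hlI
    unfold cycleVertex at hkl
    rw [if_neg (by omega), if_neg (by omega), if_neg (by omega), if_neg (by omega)] at hkl
    have := hd.2.2.2.2.1 (k - 1) (by omega) (l - 1) (by omega) hkl
    omega

lemma injOn_cycleEdge (hρ : 2 ≤ ρ) (hd : ShortCycData G I ρ a u u') :
    Set.InjOn (fun i => s(cycleVertex ρ a u u' (2 * i), cycleVertex ρ a u u' (2 * i + 1)))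
      (range ρ) := by
  intro i hi j hj hij
  simp only [coe_range, Set.mem_Iio] at hi hj
  rcases Sym2.eq_iff.mp hij with ⟨h₁, h₂⟩ | ⟨h₁, h₂⟩
  · have := hd.eq_or_endpoints_of_cycleVertex_eq hρ (by omega) (by omega) h₁
    have := hd.eq_or_endpoints_of_cycleVertex_eq hρ (by omega) (by omega) h₂
    omega
  · have := hd.eq_or_endpoints_of_cycleVertex_eq hρ (by omega) (by omega) h₁
    have := hd.eq_or_endpoints_of_cycleVertex_eq hρ (by omega) (by omega) h₂
    omega

lemma dist_cycleVertex (hρ : 2 ≤ ρ) (hd : ShortCycData G I ρ a u u')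
    (hog : HasOddGirth (contract G ↑I) (2 * ρ - 1)) {k : ℕ} (hk : k < 2 * ρ) :
    (contract G ↑I).Reachable none (contractProj ↑I (cycleVertex ρ a u u' k)) ∧
      (contract G ↑I).dist none (contractProj ↑I (cycleVertex ρ a u u' k)) =
        min k (2 * ρ - 1 - k) := by
  set z := fun k => contractProj (↑I) (cycleVertex ρ a u u' k)
  have hend : ∀ k, (k = 0 ∨ k = 2 * ρ - 1) → z k = none := fun k hk =>
    contractProj_of_mem (mem_coe.mpr ((hd.cycleVertex_mem_iff hρ (by omega)).mpr hk))
  have hz : ∀ j < 2 * ρ - 1, (contract G ↑I).Adj (z j) (z (j + 1)) := fun j hj =>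
    contract_adj_contractProj (hd.adj_cycleVertex hρ hj) (by
      simp only [mem_coe, hd.cycleVertex_mem_iff hρ (by omega : j < 2 * ρ),
        hd.cycleVertex_mem_iff hρ (by omega : j + 1 < 2 * ρ)]
      omega)
  have hz' : ∀ j < 2 * ρ - 1, (contract G ↑I).Adj (z (2 * ρ - 1 - j)) (z (2 * ρ - 1 - (j + 1))) :=
    fun j hj => by
      simpa [show 2 * ρ - 1 - j = 2 * ρ - 1 - (j + 1) + 1 by omega] using
        (hz (2 * ρ - 1 - (j + 1)) (by omega)).symm
  obtain ⟨p, hp⟩ := SimpleGraph.exists_walk_length_eq_of_adj_succ hz k (by omega)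
  obtain ⟨q, hq⟩ := SimpleGraph.exists_walk_length_eq_of_adj_succ hz' (2 * ρ - 1 - k) (by omega)
  let p' := p.copy (hend 0 (by omega)) rfl
  have hqk : z (2 * ρ - 1 - (2 * ρ - 1 - k)) = z k := congrArg z (by omega)
  let q' := q.copy (hend _ (by omega)) hqk
  refine ⟨p'.reachable, ?_⟩
  rw [hog.dist_eq_min p' q' (by simp [p', q', hp, hq]; omega)]
  simp [p', q', hp, hq]

lemma cycleVertex_mem_layerSet_iff (hρ : 2 ≤ ρ) (hd : ShortCycData G I ρ a u u')
    (hog : HasOddGirth (contract G ↑I) (2 * ρ - 1)) (col : (Gdel G ↑I).Coloring (Fin 2))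
    {i : ℕ} (hi : i < ρ) :
    cycleVertex ρ a u u' (2 * i) ∈ layerSet G I ρ col ↔
      cycleVertex ρ a u u' (2 * i + 1) ∉ layerSet G I ρ col := by
  obtain ⟨hr₁, hd₁⟩ := hd.dist_cycleVertex hρ hog (k := 2 * i) (by omega)
  obtain ⟨hr₂, hd₂⟩ := hd.dist_cycleVertex hρ hog (k := 2 * i + 1) (by omega)
  simp only [layerSet, Set.mem_ofPred_eq, hr₁, hr₂, hd₁, hd₂, true_and, Nat.even_iff]
  by_cases hanti : 2 * i + 1 = ρ
  · have hcol := fin_two_eq_zero_iff_of_ne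
      (col.valid (hd.adj_Gdel_cycleVertex hρ (k := 2 * i) (by omega) (by omega)))
    rw [show min (2 * i) (2 * ρ - 1 - 2 * i) = ρ - 1 by omega,
      show min (2 * i + 1) (2 * ρ - 1 - (2 * i + 1)) = ρ - 1 by omega]
    simp only [lt_irrefl, false_or, true_and, show (ρ - 1) % 2 = 0 by omega, hcol]
  · rcases (by omega : min (2 * i) (2 * ρ - 1 - 2 * i) % 2 = 0 ∧
        min (2 * i) (2 * ρ - 1 - 2 * i) < ρ - 1 ∧
        min (2 * i + 1) (2 * ρ - 1 - (2 * i + 1)) % 2 = 1 ∨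
      min (2 * i) (2 * ρ - 1 - 2 * i) % 2 = 1 ∧
        min (2 * i + 1) (2 * ρ - 1 - (2 * i + 1)) % 2 = 0 ∧
        min (2 * i + 1) (2 * ρ - 1 - (2 * i + 1)) < ρ - 1) with ⟨h₁, h₂, h₃⟩ | ⟨h₁, h₂, h₃⟩ <;>
      simp [h₁, h₂, h₃]

variable [DecidableEq V]

lemma ysum_yCyc [Fintype V] (hρ : 2 ≤ ρ) (hd : ShortCycData G I ρ a u u') (v : V) :
    ysum (yCyc ρ a u u') (fun e => e ∈ G.edgeSet ∧ v ∈ e) =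
      (∑ k ∈ range (2 * ρ), if cycleVertex ρ a u u' k = v then 1 else 0) / ρ := by
  set x := cycleVertex ρ a u u'
  set M := (range ρ).image fun i => s(x (2 * i), x (2 * i + 1))
  have hM : ∀ e, yCyc ρ a u u' e = if e ∈ M then (1 / ρ : ℝ) else 0 := fun e => by
    simp only [yCyc_eq hρ, M, mem_image, mem_range, x]
  have hMG : ∀ e ∈ M, e ∈ G.edgeSet := by
    simp only [M, mem_image, mem_range]
    rintro _ ⟨i, hi, rfl⟩
    exact hd.adj_cycleVertex hρ (by omega)
  calc ysum (yCyc ρ a u u') (fun e => e ∈ G.edgeSet ∧ v ∈ e)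
      = ∑ e ∈ M, if v ∈ e then (1 / ρ : ℝ) else 0 := by
        rw [ysum, ← sum_subset (subset_univ M)]
        · refine sum_congr rfl fun e he => ?_
          simp [hM, he, hMG e he]
        · intro e _ he
          simp [hM, he]
    _ = ∑ i ∈ range ρ, if v ∈ s(x (2 * i), x (2 * i + 1)) then (1 / ρ : ℝ) else 0 :=
        sum_image (hd.injOn_cycleEdge hρ)
    _ = ∑ i ∈ range ρ,
          ((if x (2 * i) = v then 1 else 0) + (if x (2 * i + 1) = v then 1 else 0)) / (ρ : ℝ) := by
        refine sum_congr rfl fun i hi => ?_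
        have hne : x (2 * i) ≠ x (2 * i + 1) :=
          (hd.adj_cycleVertex hρ (by simp at hi; omega)).ne
        by_cases h₁ : x (2 * i) = v <;> by_cases h₂ : x (2 * i + 1) = v
        · exact absurd (h₁.trans h₂.symm) hne
        all_goals simp [h₁, h₂, Sym2.mem_iff, @eq_comm _ v]
    _ = _ := by rw [sum_range_two_mul (fun k => if x k = v then (1 : ℝ) else 0), sum_div]

lemma sum_ysum_yCyc [Fintype V] (hρ : 2 ≤ ρ) (hd : ShortCycData G I ρ a u u') (C : Finset V) :
    ∑ v ∈ C, ysum (yCyc ρ a u u') (fun e => e ∈ G.edgeSet ∧ v ∈ e) =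
      visitCount (cycleVertex ρ a u u') (2 * ρ) C / ρ := by
  simp_rw [hd.ysum_yCyc hρ]
  rw [← sum_div, sum_comm, visitCount]
  simp

lemma visitCount_self (hρ : 2 ≤ ρ) (hd : ShortCycData G I ρ a u u') :
    visitCount (cycleVertex ρ a u u') (2 * ρ) I = 2 := by
  rw [show 2 * ρ = 2 * (ρ - 1) + 2 by omega, visitCount_add_two, visitCount_eq_zero,
    if_pos, if_pos] <;> norm_num
  · exact (hd.cycleVertex_mem_iff hρ (by omega)).mpr (by omega)
  · exact (hd.cycleVertex_mem_iff hρ (by omega)).mpr (by omega)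
  · intro k hk
    rw [hd.cycleVertex_mem_iff hρ (by omega)]
    omega

lemma le_visitCount_of_isVC (hρ : 2 ≤ ρ) (hd : ShortCycData G I ρ a u u') {C : Finset V}
    (hC : IsVC G C) : (ρ : ℝ) ≤ visitCount (cycleVertex ρ a u u') (2 * ρ) C :=
  le_visitCount_of_pairs fun _ hi => hC (hd.adj_cycleVertex hρ (by omega))

lemma le_visitCount_of_isVC_Gdel (hρ : 2 ≤ ρ) (hd : ShortCycData G I ρ a u u') {C : Finset V}
    (hC : IsVC (Gdel G ↑I) C) : (ρ : ℝ) - 1 ≤ visitCount (cycleVertex ρ a u u') (2 * ρ) C := by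
  have hpairs := le_visitCount_of_pairs (x := fun k => cycleVertex ρ a u u' (k + 1)) (C := C)
    (n := ρ - 1) fun i hi => hC (hd.adj_Gdel_cycleVertex hρ (k := 2 * i + 1) (by omega) (by omega))
  rw [Nat.cast_sub (by omega), Nat.cast_one] at hpairs
  rw [show 2 * ρ = 2 * (ρ - 1) + 2 by omega, visitCount_add_two]
  have h₀ : (0 : ℝ) ≤ if cycleVertex ρ a u u' 0 ∈ C then 1 else 0 := by split_ifs <;> norm_num
  have h₁ : (0 : ℝ) ≤ if cycleVertex ρ a u u' (2 * (ρ - 1) + 1) ∈ C then 1 else 0 := by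
    split_ifs <;> norm_num
  linarith

lemma visitCount_filter_eq_zero [Fintype V] (hρ : 2 ≤ ρ) (hd : ShortCycData G I ρ a u u')
    (col : (Gdel G ↑I).Coloring (Fin 2)) :
    visitCount (cycleVertex ρ a u u') (2 * ρ) (Iᶜ.filter (col · = 0)) = ρ - 1 := by
  have hout : ∀ k, (k = 0 ∨ k = 2 * ρ - 1) → cycleVertex ρ a u u' k ∉ Iᶜ.filter (col · = 0) :=
    fun k hk => by simp [(hd.cycleVertex_mem_iff hρ (by omega)).mpr hk]
  rw [show 2 * ρ = 2 * (ρ - 1) + 2 by omega, visitCount_add_two, visitCount_eq_of_pairs,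
    if_neg (hout 0 (by omega)), if_neg (hout _ (by omega)), Nat.cast_sub (by omega)]
  · ring
  intro i hi
  have hadj := hd.adj_Gdel_cycleVertex hρ (k := 2 * i + 1) (by omega) (by omega)
  obtain ⟨-, h₁, h₂⟩ := Gdel_adj_s11.mp hadj
  simp only [mem_coe] at h₁ h₂
  simp only [mem_filter, mem_compl, h₁, h₂, not_false_eq_true, true_and]
  exact fin_two_eq_zero_iff_of_ne (col.valid hadj)

open Classical in
lemma visitCount_compl_layerSet [Fintype V] (hρ : 2 ≤ ρ) (hd : ShortCycData G I ρ a u u')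
    (hog : HasOddGirth (contract G ↑I) (2 * ρ - 1)) (col : (Gdel G ↑I).Coloring (Fin 2)) :
    visitCount (cycleVertex ρ a u u') (2 * ρ) (univ.filter (· ∉ layerSet G I ρ col)) = ρ :=
  visitCount_eq_of_pairs fun i hi => by
    have := hd.cycleVertex_mem_layerSet_iff hρ hog col hi
    simp only [mem_filter, mem_univ, true_and]
    tauto

end ShortCycData
theorem round_bipartize_indep_set_tight_general {V : Type*} [Fintype V] [DecidableEq V]
    (G : SimpleGraph V)
    (I : Finset V) (hI : IsIndep G I) (hbip : (Gdel G ↑I).Colorable 2)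
    (ρ : ℕ) (hρ : 2 ≤ ρ) (hog : HasOddGirth (contract G ↑I) (2 * ρ - 1))
    (n : ℕ)
    (a : Fin n → ℕ → V) (u u' : Fin n → V)
    (hdata : ∀ m : Fin n, ShortCycData G I ρ (a m) (u m) (u' m))
    (lam : Fin n → ℝ) (hlam0 : ∀ m, 0 ≤ lam m) (hlam1 : ∑ m, lam m = 1)
    (w : V → ℝ)
    (hw : ∀ v : V, w v = ∑ m : Fin n,
      lam m * ysum (yCyc ρ (a m) (u m) (u' m)) (fun e => e ∈ G.edgeSet ∧ v ∈ e)) :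
    OPT G w = 1 ∧ ∑ v ∈ I, w v = 2 / (ρ : ℝ) ∧
      OPT (Gdel G ↑I) w = ((ρ : ℝ) - 1) / (ρ : ℝ) ∧
      ∑ v ∈ I, w v + OPT (Gdel G ↑I) w = (1 + 1 / (ρ : ℝ)) * OPT G w := by
  obtain ⟨col⟩ := hbip
  have hρ₀ : (0 : ℝ) < ρ := by positivity
  have hweight : ∀ C : Finset V, ∑ v ∈ C, w v =
      ∑ m, lam m * (visitCount (cycleVertex ρ (a m) (u m) (u' m)) (2 * ρ) C / ρ) := fun C => by
    simp_rw [hw, ← (hdata _).sum_ysum_yCyc hρ, mul_sum]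
    exact sum_comm
  have hOPT : OPT G w = 1 := by
    refine OPT_eq_of_isVC (isVC_compl_layerSet hρ hI hog col) ?_ fun C hC => ?_
    · exact (hweight _).trans <| sum_mul_eq_of_sum_eq_one hlam1 fun m _ => by
        rw [(hdata m).visitCount_compl_layerSet hρ hog col, div_self hρ₀.ne']
    · refine (hweight C).symm ▸ le_sum_mul_of_sum_eq_one (fun m _ => hlam0 m) hlam1 fun m _ => ?_
      exact (one_le_div hρ₀).mpr ((hdata m).le_visitCount_of_isVC hρ hC)
  have hIw : ∑ v ∈ I, w v = 2 / ρ := (hweight I).trans <| sum_mul_eq_of_sum_eq_one hlam1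
    fun m _ => by rw [(hdata m).visitCount_self hρ]
  have hdel : OPT (Gdel G ↑I) w = (ρ - 1) / ρ := by
    refine OPT_eq_of_isVC (isVC_Gdel_filter_eq_zero col) ?_ fun C hC => ?_
    · exact (hweight _).trans <| sum_mul_eq_of_sum_eq_one hlam1
        fun m _ => by rw [(hdata m).visitCount_filter_eq_zero hρ col]
    · refine (hweight C).symm ▸ le_sum_mul_of_sum_eq_one (fun m _ => hlam0 m) hlam1 fun m _ => ?_
      exact div_le_div_of_nonneg_right ((hdata m).le_visitCount_of_isVC_Gdel hρ hC) hρ₀.le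
  refine ⟨hOPT, hIw, hdel, ?_⟩
  rw [hOPT, hIw, hdel]
  field_simp
  ring

/-- tightness for an independent bipartizing set.  For every convex
combination of the weight functions `w^C` of shortest odd cycles of `G/I`, the ratio
`1 + 1/ρ` is attained. -/
theorem round_bipartize_indep_set_tight {V : Type*} [Fintype V] [DecidableEq V]
    (G : SimpleGraph V) (hnb : ¬ G.Colorable 2)
    (I : Finset V) (hI : IsIndep G I) (hbip : (Gdel G ↑I).Colorable 2)
    (ρ : ℕ) (hρ : 2 ≤ ρ) (hog : HasOddGirth (contract G ↑I) (2 * ρ - 1))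
    (n : ℕ) (hn : 0 < n)
    (a : Fin n → ℕ → V) (u u' : Fin n → V)
    (hdata : ∀ m : Fin n, ShortCycData G I ρ (a m) (u m) (u' m))
    (lam : Fin n → ℝ) (hlam0 : ∀ m, 0 ≤ lam m) (hlam1 : ∑ m, lam m = 1)
    (w : V → ℝ)
    (hw : ∀ v : V, w v = ∑ m : Fin n,
      lam m * ysum (yCyc ρ (a m) (u m) (u' m)) (fun e => e ∈ G.edgeSet ∧ v ∈ e)) :
    OPT G w = 1 ∧ ∑ v ∈ I, w v = 2 / (ρ : ℝ) ∧
      OPT (Gdel G ↑I) w = ((ρ : ℝ) - 1) / (ρ : ℝ) ∧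
      ∑ v ∈ I, w v + OPT (Gdel G ↑I) w = (1 + 1 / (ρ : ℝ)) * OPT G w :=
  round_bipartize_indep_set_tight_general G I hI hbip ρ hρ hog n a u u' hdata lam hlam0 hlam1 w hw
end
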